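/- arXiv:1002.3735 — 11 statements merged into one kernel-verified Lean document; each statement's English description precedes it below -/
import Mathlib

section
/- Let R be a commutative ring, r₁ r₂ : R, and p ≥ 1. Let x : (Fin p → ℕ) → R be a multiple Fibonacci sequence of type (r₁ + r₂, −r₁·r₂), i.e. for every coordinate i : Fin p and every multi-index A : Fin p → ℕ one has x(A[i ↦ A i + 2]) = (r₁ + r₂)·x(A[i ↦ A i + 1]) − r₁·r₂·x(A), where A[i ↦ v] denotes the function A updated at i to the value v. Define S₀(n) = r₁^n·r₂ − r₁·r₂^n and S₁(n) = r₂^n − r₁^n for n : ℕ. Then for every A : Fin p → ℕ, (r₂ − r₁)^p · x(A) = ∑ over all J : Fin p → Fin 2 of (∏ i, S_{J i}(A i)) · x(J), where in x(J) the function J is viewed as taking values 0 and 1 in ℕ. -/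
/-!
In one variable, a sequence with `y (n + 2) = (r₁ + r₂) y (n + 1) - r₁ r₂ y n` satisfies
`(r₂ - r₁) y n = S₀ n · y 0 + S₁ n · y 1`, by two-step induction on `n`. Applied in the first
coordinate, this expresses `(r₂ - r₁) x A` through the two slices `B ↦ x (Fin.cons j B)`,
`j = 0, 1`, which are again multiple Fibonacci sequences in the remaining `p - 1` coordinates;
induction on `p` expands them fully.
-/

open Finset Function

section
variable {R : Type*} [CommRing R]

def IsMultiFibonacci {ι : Type*} [DecidableEq ι] (r₁ r₂ : R) (x : (ι → ℕ) → R) : Prop :=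
  ∀ (i : ι) (A : ι → ℕ),
    x (update A i (A i + 2)) = (r₁ + r₂) * x (update A i (A i + 1)) - r₁ * r₂ * x A

def binetCoeff (r₁ r₂ : R) : Fin 2 → ℕ → R :=
  ![fun n => r₁ ^ n * r₂ - r₁ * r₂ ^ n, fun n => r₂ ^ n - r₁ ^ n]

theorem sub_mul_eq_of_recurrence (r₁ r₂ : R) (y : ℕ → R)
    (hy : ∀ n, y (n + 2) = (r₁ + r₂) * y (n + 1) - r₁ * r₂ * y n) (n : ℕ) :
    (r₂ - r₁) * y n = (r₁ ^ n * r₂ - r₁ * r₂ ^ n) * y 0 + (r₂ ^ n - r₁ ^ n) * y 1 := by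
  induction n using Nat.twoStepInduction with
  | zero => ring
  | one => ring
  | more n h₀ h₁ =>
    rw [hy n]
    linear_combination (r₁ + r₂) * h₁ - r₁ * r₂ * h₀

namespace IsMultiFibonacci

variable {r₁ r₂ : R}

theorem sub_mul_eq_sum_update {ι : Type*} [DecidableEq ι] {x : (ι → ℕ) → R}
    (hx : IsMultiFibonacci r₁ r₂ x) (i : ι) (A : ι → ℕ) :
    (r₂ - r₁) * x A = ∑ j : Fin 2, binetCoeff r₁ r₂ j (A i) * x (update A i j) := by
  have hline := sub_mul_eq_of_recurrence r₁ r₂ (fun n => x (update A i n))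
    (fun n => by simpa using hx i (update A i n)) (A i)
  simpa [Fin.sum_univ_two, binetCoeff] using hline

theorem comp_cons {p : ℕ} {x : (Fin (p + 1) → ℕ) → R} (hx : IsMultiFibonacci r₁ r₂ x) (n : ℕ) :
    IsMultiFibonacci r₁ r₂ (fun B => x (Fin.cons n B)) := by
  intro i B
  simpa only [Fin.cons_update, Fin.cons_succ] using hx i.succ (Fin.cons n B)

theorem general_term {p : ℕ} {x : (Fin p → ℕ) → R} (hx : IsMultiFibonacci r₁ r₂ x)
    (A : Fin p → ℕ) :
    (r₂ - r₁) ^ p * x A =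
      ∑ J : Fin p → Fin 2, (∏ i, binetCoeff r₁ r₂ (J i) (A i)) * x (fun i => (J i : ℕ)) := by
  induction p with
  | zero => simpa using congrArg x (Subsingleton.elim _ _)
  | succ p ih =>
    rw [← (Fin.consEquiv fun _ => Fin 2).sum_comp, Fintype.sum_prod_type, pow_succ, mul_assoc,
      hx.sub_mul_eq_sum_update 0, mul_sum]
    refine sum_congr rfl fun j _ => ?_
    rw [← Fin.cons_self_tail A, Fin.update_cons_zero, mul_left_comm, ih (hx.comp_cons j), mul_sum]
    refine sum_congr rfl fun J _ => ?_
    have hval : (fun i => ((Fin.cons j J : Fin (p + 1) → Fin 2) i : ℕ)) =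
        Fin.cons (j : ℕ) (fun i => (J i : ℕ)) :=
      Fin.comp_cons Fin.val j J
    simp only [Fin.consEquiv_apply, Fin.prod_univ_succ, Fin.cons_zero, Fin.cons_succ, hval]
    ring

end IsMultiFibonacci

end

theorem multiple_fibonacci_general_term_general {R : Type*} [CommRing R]
    (r₁ r₂ : R) (p : ℕ)
    (x : (Fin p → ℕ) → R)
    (hx : ∀ (i : Fin p) (A : Fin p → ℕ),
      x (Function.update A i (A i + 2)) =
        (r₁ + r₂) * x (Function.update A i (A i + 1)) - r₁ * r₂ * x A)
    (S : Fin 2 → ℕ → R)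
    (hS0 : ∀ n : ℕ, S 0 n = r₁ ^ n * r₂ - r₁ * r₂ ^ n)
    (hS1 : ∀ n : ℕ, S 1 n = r₂ ^ n - r₁ ^ n) :
    ∀ A : Fin p → ℕ,
      (r₂ - r₁) ^ p * x A =
        ∑ J : Fin p → Fin 2, (∏ i, S (J i) (A i)) * x (fun i => (J i : ℕ)) := by
  obtain rfl : S = binetCoeff r₁ r₂ := by
    funext j n
    fin_cases j
    exacts [hS0 n, hS1 n]
  exact IsMultiFibonacci.general_term hx

/-- **Theorem 6.1(a)** (general term of a multiple Fibonacci sequence).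
If `x : (Fin p → ℕ) → R` satisfies, in each coordinate, the recurrence
`x(A[i ↦ A i + 2]) = (r₁ + r₂)·x(A[i ↦ A i + 1]) − r₁·r₂·x(A)`, then with
`S₀(n) = r₁^n·r₂ − r₁·r₂^n` and `S₁(n) = r₂^n − r₁^n`, for every multi-index `A`,
`(r₂ − r₁)^p · x(A) = ∑_{J ∈ {0,1}^p} (∏ i, S_{J i}(A i)) · x(J)`. -/
theorem multiple_fibonacci_general_term {R : Type*} [CommRing R]
    (r₁ r₂ : R) (p : ℕ) (hp : 1 ≤ p)
    (x : (Fin p → ℕ) → R)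
    (hx : ∀ (i : Fin p) (A : Fin p → ℕ),
      x (Function.update A i (A i + 2)) =
        (r₁ + r₂) * x (Function.update A i (A i + 1)) - r₁ * r₂ * x A)
    (S : Fin 2 → ℕ → R)
    (hS0 : ∀ n : ℕ, S 0 n = r₁ ^ n * r₂ - r₁ * r₂ ^ n)
    (hS1 : ∀ n : ℕ, S 1 n = r₂ ^ n - r₁ ^ n) :
    ∀ A : Fin p → ℕ,
      (r₂ - r₁) ^ p * x A =
        ∑ J : Fin p → Fin 2, (∏ i, S (J i) (A i)) * x (fun i => (J i : ℕ)) :=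
  multiple_fibonacci_general_term_general r₁ r₂ p x hx S hS0 hS1
end

section
/- Let x : (Fin k → ℤ) → ℤ[T,T⁻¹] satisfy the Jones recurrence in each coordinate: for every i : Fin k and every A : Fin k → ℤ, x(A[i ↦ A i + 2]) = (T³ − T)·x(A[i ↦ A i + 1]) + T⁴·x(A). For a : ℤ define the Laurent polynomials P₀(a) = T^(3a) + ε(a)·T^(a+2) and P₁(a) = T^(3a−1) + (−ε(a))·T^(a−1), where ε(a) = 1 if a is even and ε(a) = −1 if a is odd. Then for every A : Fin k → ℤ, (1 + T²)^k · x(A) = ∑ over all J : Fin k → Fin 2 of (∏ i, P_{J i}(A i)) · x(J), where in x(J) the function J is viewed as taking values 0 and 1 in ℤ. -/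
/-!
The solutions `y : ℤ → R` of `y (n + 2) = a * y (n + 1) + b * y n` form a submodule, and when `b`
is cancellable a solution is determined by `y 0` and `y 1` (run the recurrence backwards).
For `a = T³ - T`, `b = T⁴` the characteristic roots are `T³` and `-T`, and
`P₀ n = (T³)ⁿ + T² (-T)ⁿ`, `P₁ n = T⁻¹ ((T³)ⁿ - (-T)ⁿ)` are solutions with initial values
`(1 + T², 0)` and `(0, 1 + T²)`. Hence `(1 + T²) y n = P₀ n * y 0 + P₁ n * y 1` for every solution,
and applying this in one coordinate after another gives the expansion formula.
-/

open LaurentPolynomial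

section Recurrence

variable {R : Type*} [CommRing R]

def recurrenceSolutions (a b : R) : Submodule R (ℤ → R) where
  carrier := {y | ∀ n, y (n + 2) = a * y (n + 1) + b * y n}
  add_mem' {f g} hf hg n := by simp only [Pi.add_apply, hf n, hg n]; ring
  zero_mem' n := by simp
  smul_mem' c y hy n := by simp only [Pi.smul_apply, smul_eq_mul, hy n]; ring

variable {a b : R}

theorem mem_recurrenceSolutions_of_succ {r : R} (hr : r ^ 2 = a * r + b) {y : ℤ → R}
    (hy : ∀ n, y (n + 1) = r * y n) : y ∈ recurrenceSolutions a b := fun n => by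
  rw [show n + 2 = n + 1 + 1 by ring, hy, hy, ← mul_assoc, ← sq, hr]; ring

theorem eq_zero_of_mem_recurrenceSolutions (hb : IsLeftRegular b) {y : ℤ → R}
    (hy : y ∈ recurrenceSolutions a b) (h0 : y 0 = 0) (h1 : y 1 = 0) : y = 0 := by
  suffices ∀ n, y n = 0 ∧ y (n + 1) = 0 from funext fun n => (this n).1
  intro n
  induction n using Int.induction_on with
  | zero => exact ⟨h0, by simpa using h1⟩
  | succ n ih => exact ⟨ih.2, by rw [add_assoc, one_add_one_eq_two, hy, ih.1, ih.2]; ring⟩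
  | pred n ih =>
    refine ⟨hb ?_, by rw [sub_add_cancel]; exact ih.1⟩
    have h := hy (-n - 1)
    rw [show -(n : ℤ) - 1 + 2 = -n + 1 by ring, sub_add_cancel, ih.1, ih.2] at h
    simpa using h.symm

theorem eq_of_mem_recurrenceSolutions (hb : IsLeftRegular b) {f g : ℤ → R}
    (hf : f ∈ recurrenceSolutions a b) (hg : g ∈ recurrenceSolutions a b)
    (h0 : f 0 = g 0) (h1 : f 1 = g 1) : f = g :=
  sub_eq_zero.mp <| eq_zero_of_mem_recurrenceSolutions hb (sub_mem hf hg)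
    (by simp [h0]) (by simp [h1])

variable {c : R} {p : Fin 2 → ℤ → R}

theorem mul_eq_sum_of_mem_recurrenceSolutions (hb : IsLeftRegular b)
    (hp : ∀ j, p j ∈ recurrenceSolutions a b)
    (hp_init : ∀ j j' : Fin 2, p j j' = if j = j' then c else 0)
    {y : ℤ → R} (hy : y ∈ recurrenceSolutions a b) (n : ℤ) :
    c * y n = ∑ j : Fin 2, p j n * y j := by
  have hsum : ∑ j : Fin 2, y j • p j ∈ recurrenceSolutions a b :=
    Submodule.sum_mem _ fun j _ => Submodule.smul_mem _ _ (hp j)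
  have hinit (j' : Fin 2) : (c • y) j' = (∑ j : Fin 2, y j • p j) j' := by
    simp [Finset.sum_apply, hp_init, mul_comm]
  have := eq_of_mem_recurrenceSolutions hb (Submodule.smul_mem _ c hy) hsum
    (by simpa using hinit 0) (by simpa using hinit 1)
  simpa [Finset.sum_apply, mul_comm] using congrFun this n

theorem pow_mul_eq_sum_prod_of_mem_recurrenceSolutions (hb : IsLeftRegular b)
    (hp : ∀ j, p j ∈ recurrenceSolutions a b)
    (hp_init : ∀ j j' : Fin 2, p j j' = if j = j' then c else 0) :
    ∀ {k : ℕ} {x : (Fin k → ℤ) → R},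
      (∀ i A, (fun e => x (Function.update A i e)) ∈ recurrenceSolutions a b) →
      ∀ A, c ^ k * x A =
        ∑ J : Fin k → Fin 2, (∏ i, p (J i) (A i)) * x (fun i => ((J i : ℕ) : ℤ))
  | 0, x, _, A => by simpa using congrArg x (Subsingleton.elim _ _)
  | k + 1, x, hx, A => by
    have hhead : (fun e => x (Fin.cons e (Fin.tail A))) ∈ recurrenceSolutions a b := by
      simpa [Fin.update_cons_zero] using hx 0 (Fin.cons 0 (Fin.tail A))
    have htail (e : ℤ) : c ^ k * x (Fin.cons e (Fin.tail A)) = ∑ J : Fin k → Fin 2,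
        (∏ i, p (J i) (A i.succ)) * x (Fin.cons e fun i => ((J i : ℕ) : ℤ)) :=
      pow_mul_eq_sum_prod_of_mem_recurrenceSolutions hb hp hp_init
        (x := fun B => x (Fin.cons e B))
        (fun i B => by simpa [Fin.cons_update] using hx i.succ (Fin.cons e B)) (Fin.tail A)
    calc c ^ (k + 1) * x A = c ^ k * (c * x (Fin.cons (A 0) (Fin.tail A))) := by
          rw [Fin.cons_self_tail, pow_succ, mul_assoc]
      _ = ∑ j : Fin 2, p j (A 0) * (c ^ k * x (Fin.cons (j : ℤ) (Fin.tail A))) := by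
          rw [mul_eq_sum_of_mem_recurrenceSolutions hb hp hp_init hhead, Finset.mul_sum]
          simp only [mul_left_comm]
      _ = _ := by
          simp only [htail, Finset.mul_sum]
          rw [← (Fin.consEquiv fun _ => Fin 2).sum_comp, Fintype.sum_prod_type]
          refine Finset.sum_congr rfl fun j _ => Finset.sum_congr rfl fun J _ => ?_
          have hcast : (fun i => ((Fin.consEquiv (fun _ => Fin 2) (j, J) i : ℕ) : ℤ)) =
              Fin.cons (j : ℤ) fun i => ((J i : ℕ) : ℤ) :=
            Fin.comp_cons (fun j : Fin 2 => ((j : ℕ) : ℤ)) j J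
          rw [hcast, Fin.prod_univ_succ]
          simp only [Fin.consEquiv_apply, Fin.cons_zero, Fin.cons_succ]
          ring

end Recurrence

section Jones

noncomputable abbrev jonesSolutions : Submodule (LaurentPolynomial ℤ) (ℤ → LaurentPolynomial ℤ) :=
  recurrenceSolutions (T 3 - T 1) (T 4)

theorem T_three_mul_mem_jonesSolutions : (fun n : ℤ => T (3 * n)) ∈ jonesSolutions :=
  mem_recurrenceSolutions_of_succ (r := T 3) (by rw [sq, sub_mul, ← T_add, ← T_add]; norm_num)
    fun n => by rw [mul_add, mul_one, T_add, mul_comm]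

theorem sign_mul_T_mem_jonesSolutions :
    (fun n : ℤ => (if Even n then 1 else -1) * T n) ∈ jonesSolutions :=
  mem_recurrenceSolutions_of_succ (r := -T 1)
    (by rw [neg_sq, mul_neg, sub_mul, ← T_add, ← T_add]; norm_num)
    fun n => by
      rw [T_add]
      by_cases h : Even n <;>
        simp only [h, Int.even_add_one, not_true_eq_false, not_false_eq_true, if_true, if_false] <;>
        ring

theorem jonesP0_mem_jonesSolutions :
    (fun a : ℤ => T (3 * a) + (if Even a then 1 else -1) * T (a + 2)) ∈ jonesSolutions := by
  convert add_mem T_three_mul_mem_jonesSolutions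
    (Submodule.smul_mem _ (T 2) sign_mul_T_mem_jonesSolutions) using 1
  ext1 a
  simp only [Pi.add_apply, Pi.smul_apply, smul_eq_mul, T_add]
  ring

theorem jonesP1_mem_jonesSolutions :
    (fun a : ℤ => T (3 * a - 1) + (if Even a then -1 else 1) * T (a - 1)) ∈ jonesSolutions := by
  convert Submodule.smul_mem _ (T (-1))
    (sub_mem T_three_mul_mem_jonesSolutions sign_mul_T_mem_jonesSolutions) using 1
  ext1 a
  rw [Pi.smul_apply, Pi.sub_apply, smul_eq_mul, sub_eq_add_neg (3 * a), sub_eq_add_neg a,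
    T_add, T_add]
  split_ifs <;> ring

end Jones

open LaurentPolynomial in
/-- **Theorem 1.2** (expansion formula for Jones polynomials, algebraic form).
If `x : (Fin k → ℤ) → ℤ[T,T⁻¹]` satisfies the Jones recurrence
`x(A[i ↦ e+2]) = (T³ − T)·x(A[i ↦ e+1]) + T⁴·x(A)` in each coordinate, then with
`P₀(a) = T^{3a} + ε(a)T^{a+2}` and `P₁(a) = T^{3a−1} − ε(a)T^{a−1}` (`ε(a) = ±1`
according to the parity of `a`), for every `A : Fin k → ℤ`,
`(1 + T²)^k · x(A) = ∑_{J ∈ {0,1}^k} (∏ i, P_{J i}(A i)) · x(J)`. -/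
theorem jones_expansion_formula (k : ℕ)
    (x : (Fin k → ℤ) → LaurentPolynomial ℤ)
    (hx : ∀ (i : Fin k) (A : Fin k → ℤ),
      x (Function.update A i (A i + 2)) =
        (T 3 - T 1) * x (Function.update A i (A i + 1)) + T 4 * x A)
    (P : Fin 2 → ℤ → LaurentPolynomial ℤ)
    (hP0 : ∀ a : ℤ, P 0 a = T (3 * a) + (if Even a then 1 else -1) * T (a + 2))
    (hP1 : ∀ a : ℤ, P 1 a = T (3 * a - 1) + (if Even a then -1 else 1) * T (a - 1)) :
    ∀ A : Fin k → ℤ,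
      (1 + T 2) ^ k * x A =
        ∑ J : Fin k → Fin 2,
          (∏ i, P (J i) (A i)) * x (fun i => ((J i : ℕ) : ℤ)) := by
  have hP : ∀ j, P j ∈ jonesSolutions := by
    rw [Fin.forall_fin_two, funext hP0, funext hP1]
    exact ⟨jonesP0_mem_jonesSolutions, jonesP1_mem_jonesSolutions⟩
  have hP_init : ∀ j j' : Fin 2, P j j' = if j = j' then 1 + T 2 else 0 := by
    simp [Fin.forall_fin_two, hP0, hP1, T_zero, add_comm]
  have hx_mem : ∀ i A, (fun e => x (Function.update A i e)) ∈ jonesSolutions :=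
    fun i A e => by simpa using hx i (Function.update A i e)
  exact pow_mul_eq_sum_prod_of_mem_recurrenceSolutions (isUnit_T 4).isRegular.left
    hP hP_init hx_mem
end

section
/- Let L = ℤ[T,T⁻¹] and let x : (Fin k → ℕ) → L satisfy the Jones recurrence in each coordinate: for every i : Fin k and A : Fin k → ℕ, x(A[i ↦ A i + 2]) = (T³ − T)·x(A[i ↦ A i + 1]) + T⁴·x(A). Let G ∈ MvPowerSeries (Fin k) L be the power series whose coefficient at each monomial A : Fin k →₀ ℕ is x(A). For each i set, in MvPowerSeries (Fin k) L, q_i = (1 − T³·X_i)·(1 + T·X_i), Q₀,ᵢ = 1 − (T³ − T)·X_i, and Q₁,ᵢ = X_i, where X_i is the i-th indeterminate. Then (∏ i, q_i) · G = ∑ over all J : Fin k → Fin 2 of (∏ i, Q_{J i},ᵢ) · x(J), where x(J) is viewed as a constant power series. -/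
/-!
Let `F` be the generating function of a coefficient function `f` with
`f(A + 2eᵢ) = a f(A + eᵢ) + b f(A)`. Write `F = F₀ + Xᵢ F'` and `F' = F₁ + Xᵢ F''`, where `F'`, `F''`
are `F` shifted once and twice in the variable `i` and `F_c` is the coefficient of `Xᵢ^c`. The
recurrence says `F'' = a F' + b F`, and eliminating `F'` and `F''` gives
`(1 - a Xᵢ - b Xᵢ²) F = (1 - a Xᵢ) F₀ + Xᵢ F₁`. The slices `F₀`, `F₁` no longer involve `Xᵢ` and still
satisfy the recurrence in the other variables, so the identity can be applied one variable at a
time; once every variable is sliced, only the constants `x(J)`, `J ∈ {0,1}^k`, remain. For the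
Jones recurrence `a = T³ - T` and `b = T⁴`, and `1 - aX - bX² = (1 - T³X)(1 + TX)`.
-/

namespace CoordinateRecurrence

open MvPowerSeries Finset Function

variable {σ R : Type*} [CommRing R]

def ofFun : ((σ → ℕ) → R) →ₗ[R] MvPowerSeries σ R where
  toFun f A := f A
  map_add' _ _ := rfl
  map_smul' _ _ := rfl

@[simp]
lemma coeff_ofFun (f : (σ → ℕ) → R) (A : σ →₀ ℕ) : coeff A (ofFun f) = f A := rfl

section

variable [DecidableEq σ]

def IsRecurrentAt (a b : R) (i : σ) (f : (σ → ℕ) → R) : Prop :=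
  ∀ A, f (update A i (A i + 2)) = a * f (update A i (A i + 1)) + b * f A

def shiftAt (i : σ) (f : (σ → ℕ) → R) : (σ → ℕ) → R :=
  fun A => f (update A i (A i + 1))

/-- `ofFun (sliceAt i c f)` is the coefficient of `X i ^ c` in `ofFun f`, as a series in the
other variables. -/
def sliceAt (i : σ) (c : ℕ) (f : (σ → ℕ) → R) : (σ → ℕ) → R :=
  fun A => if A i = 0 then f (update A i c) else 0

lemma sliceAt_zero_shiftAt (i : σ) (f : (σ → ℕ) → R) :
    sliceAt i 0 (shiftAt i f) = sliceAt i 1 f := by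
  funext A
  simp [sliceAt, shiftAt]

lemma ofFun_eq_sliceAt_add_X_mul (i : σ) (f : (σ → ℕ) → R) :
    ofFun f = ofFun (sliceAt i 0 f) + X i * ofFun (shiftAt i f) := by
  ext A
  rw [map_add, X, coeff_monomial_mul]
  simp only [Finsupp.single_le_iff]
  rcases Nat.eq_zero_or_pos (A i) with hA | hA
  · simpa [sliceAt, hA] using congrArg f (update_eq_self i ⇑A).symm
  · simp only [sliceAt, shiftAt, coeff_ofFun, if_neg hA.ne', if_pos (show 1 ≤ A i from hA),
      zero_add, one_mul]
    congr 1
    funext j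
    rcases eq_or_ne j i with rfl | hj
    · simp only [update_self, Finsupp.coe_tsub, Pi.sub_apply, Finsupp.single_eq_same]
      omega
    · simp [hj]

lemma IsRecurrentAt.mul_ofFun {a b : R} {i : σ} {f : (σ → ℕ) → R}
    (hf : IsRecurrentAt a b i f) :
    (1 - C a * X i - C b * X i ^ 2) * ofFun f =
      (1 - C a * X i) * ofFun (sliceAt i 0 f) + X i * ofFun (sliceAt i 1 f) := by
  have hrec : shiftAt i (shiftAt i f) = a • shiftAt i f + b • f := by
    funext A
    simpa [shiftAt, add_assoc] using hf A
  have h0 := ofFun_eq_sliceAt_add_X_mul i f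
  have h1 := ofFun_eq_sliceAt_add_X_mul i (shiftAt i f)
  have h2 : ofFun (shiftAt i (shiftAt i f)) = C a * ofFun (shiftAt i f) + C b * ofFun f := by
    rw [hrec, map_add, map_smul, map_smul, smul_eq_C_mul, smul_eq_C_mul]
  rw [sliceAt_zero_shiftAt] at h1
  linear_combination (1 - C a * X i) * h0 + X i * h1 + X i ^ 2 * h2

/-- `ofFun (slice s J f)` is the coefficient of `∏ i ∈ s, X i ^ J i` in `ofFun f`. -/
def slice (s : Finset σ) (J : σ → ℕ) (f : (σ → ℕ) → R) : (σ → ℕ) → R :=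
  fun A => if ∀ j ∈ s, A j = 0 then f (s.piecewise J A) else 0

lemma slice_empty (J : σ → ℕ) (f : (σ → ℕ) → R) : slice ∅ J f = f := by
  funext A
  simp [slice]

lemma ofFun_slice_univ [Fintype σ] (J : σ → ℕ) (f : (σ → ℕ) → R) :
    ofFun (slice univ J f) = C (f J) := by
  ext A
  simp [slice, coeff_C, DFunLike.ext_iff]

section

variable {s : Finset σ} {i : σ}

lemma forall_mem_update_eq_zero_iff (hi : i ∉ s) (A : σ → ℕ) (m : ℕ) :
    (∀ j ∈ s, update A i m j = 0) ↔ ∀ j ∈ s, A j = 0 :=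
  forall₂_congr fun j hj => by rw [update_of_ne (ne_of_mem_of_not_mem hj hi)]

lemma sliceAt_slice (hi : i ∉ s) (J : σ → ℕ) (c : ℕ) (f : (σ → ℕ) → R) :
    sliceAt i c (slice s J f) = slice (insert i s) (update J i c) f := by
  funext A
  have hJ : s.piecewise (update J i c) A = s.piecewise J A :=
    s.piecewise_congr (fun j hj => update_of_ne (ne_of_mem_of_not_mem hj hi) ..) fun _ _ => rfl
  simp only [sliceAt, slice, forall_mem_insert, forall_mem_update_eq_zero_iff hi,
    s.update_piecewise_of_notMem J _ hi, piecewise_insert, update_self, hJ]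
  by_cases hA : A i = 0 <;> simp [hA]

lemma IsRecurrentAt.slice {a b : R} {f : (σ → ℕ) → R} (hf : IsRecurrentAt a b i f)
    (hi : i ∉ s) (J : σ → ℕ) : IsRecurrentAt a b i (slice s J f) := by
  intro A
  have hAi : s.piecewise J A i = A i := s.piecewise_eq_of_notMem _ _ hi
  simp only [CoordinateRecurrence.slice, forall_mem_update_eq_zero_iff hi,
    ← s.update_piecewise_of_notMem J _ hi]
  split_ifs
  · simpa [hAi] using hf (s.piecewise J A)
  · simp

end

section

variable [Fintype σ] {β : Type*} [Fintype β] [DecidableEq β] [Zero β]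

def supportedOn (s : Finset σ) : Finset (σ → β) :=
  univ.filter fun J => ∀ j ∉ s, J j = 0

lemma supportedOn_empty : supportedOn (∅ : Finset σ) = {(0 : σ → β)} := by
  ext J
  simp [supportedOn, funext_iff]

lemma supportedOn_univ : supportedOn (univ : Finset σ) = (univ : Finset (σ → β)) := by
  ext J
  simp [supportedOn]

lemma sum_supportedOn_insert {M : Type*} [AddCommMonoid M] {s : Finset σ} {i : σ} (hi : i ∉ s)
    (g : (σ → β) → M) :
    ∑ J ∈ supportedOn (insert i s), g J = ∑ J ∈ supportedOn s, ∑ c, g (update J i c) := by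
  rw [← sum_product']
  refine sum_nbij' (fun J => (update J i 0, J i)) (fun p => update p.1 i p.2) ?_ ?_ ?_ ?_ ?_
  all_goals simp only [supportedOn, mem_product, mem_filter, mem_univ, true_and, and_true,
    mem_insert, not_or]
  · intro J hJ j hj
    rcases eq_or_ne j i with rfl | hji
    · simp
    · simp [hji, hJ j ⟨hji, hj⟩]
  · intro p hp j ⟨hji, hj⟩
    simp [hji, hp j hj]
  · intro J _
    simp
  · intro p hp
    simp [← hp i hi]
  · intro J _
    simp

end

lemma prod_mul_ofFun_eq_sum [Fintype σ] (a b : R) (f : (σ → ℕ) → R) (s : Finset σ)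
    (hf : ∀ i ∈ s, IsRecurrentAt a b i f) :
    (∏ i ∈ s, (1 - C a * X i - C b * X i ^ 2)) * ofFun f =
      ∑ J ∈ supportedOn s, (∏ i ∈ s, if J i = (0 : Fin 2) then 1 - C a * X i else X i) *
        ofFun (slice s (Fin.val ∘ J) f) := by
  induction s using Finset.induction_on with
  | empty => simp [supportedOn_empty, slice_empty]
  | insert i s hi ih =>
    have hQ : ∀ (J : σ → Fin 2) (c : Fin 2),
        (∏ j ∈ insert i s, if update J i c j = 0 then 1 - C a * X j else X j) =
          (if c = 0 then 1 - C a * X i else X i) *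
            ∏ j ∈ s, if J j = 0 then 1 - C a * X j else (X j : MvPowerSeries σ R) := by
      intro J c
      rw [prod_insert hi, update_self]
      congr 1
      exact prod_congr rfl fun j hj => by rw [update_of_ne (ne_of_mem_of_not_mem hj hi)]
    rw [prod_insert hi, mul_assoc, ih fun j hj => hf j (mem_insert_of_mem hj),
      mul_sum, sum_supportedOn_insert hi]
    refine sum_congr rfl fun J _ => ?_
    simp only [Fin.sum_univ_two, hQ, comp_update, ← sliceAt_slice hi]
    rw [mul_left_comm, ((hf i (mem_insert_self i s)).slice hi _).mul_ofFun]
    simp only [Fin.val_zero, Fin.val_one, one_ne_zero, ite_true, ite_false]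
    ring

end

open LaurentPolynomial (T) in
lemma one_sub_C_T_three_mul_one_add_C_T_one (i : σ) :
    (1 - C (T 3) * X i) * (1 + C (T 1) * X i) =
      (1 - C (T 3 - T 1) * X i - C (T 4) * X i ^ 2 : MvPowerSeries σ (LaurentPolynomial ℤ)) := by
  have hT : (T 4 : LaurentPolynomial ℤ) = T 3 * T 1 := by rw [← LaurentPolynomial.T_add]; rfl
  rw [hT, map_sub, map_mul]
  ring

end CoordinateRecurrence

open CoordinateRecurrence

open LaurentPolynomial in
/-- **Theorem 1.3** (generating function for Jones polynomials, algebraic form).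
If `x : (Fin k → ℕ) → ℤ[T,T⁻¹]` satisfies the Jones recurrence in each coordinate
and `G` is the multivariate power series over `L = ℤ[T,T⁻¹]` whose coefficients are the
`x(A)`, then with `qᵢ = (1 − T³Xᵢ)(1 + T·Xᵢ)`, `Q₀ᵢ = 1 − (T³ − T)Xᵢ`, `Q₁ᵢ = Xᵢ`,
`(∏ i, qᵢ) · G = ∑_{J ∈ {0,1}^k} (∏ i, Q_{J i},ᵢ) · x(J)`. -/
theorem jones_generating_function (k : ℕ)
    (x : (Fin k → ℕ) → LaurentPolynomial ℤ)
    (hx : ∀ (i : Fin k) (A : Fin k → ℕ),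
      x (Function.update A i (A i + 2)) =
        (T 3 - T 1) * x (Function.update A i (A i + 1)) + T 4 * x A)
    (G : MvPowerSeries (Fin k) (LaurentPolynomial ℤ))
    (hG : ∀ A : Fin k →₀ ℕ, MvPowerSeries.coeff A G = x ⇑A)
    (q Q₀ Q₁ : Fin k → MvPowerSeries (Fin k) (LaurentPolynomial ℤ))
    (hq : ∀ i, q i =
        (1 - (MvPowerSeries.C (σ := Fin k) (R := LaurentPolynomial ℤ)) (T 3) * MvPowerSeries.X i) *
        (1 + (MvPowerSeries.C (σ := Fin k) (R := LaurentPolynomial ℤ)) (T 1) * MvPowerSeries.X i))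
    (hQ₀ : ∀ i, Q₀ i =
        1 - (MvPowerSeries.C (σ := Fin k) (R := LaurentPolynomial ℤ)) (T 3 - T 1) * MvPowerSeries.X i)
    (hQ₁ : ∀ i, Q₁ i = MvPowerSeries.X i) :
    (∏ i, q i) * G =
      ∑ J : Fin k → Fin 2,
        (∏ i, if J i = 0 then Q₀ i else Q₁ i) *
          (MvPowerSeries.C (σ := Fin k) (R := LaurentPolynomial ℤ)) (x fun i => (J i : ℕ)) := by
  have hG' : G = ofFun x := MvPowerSeries.ext hG
  rw [Finset.prod_congr rfl fun i _ => (hq i).trans (one_sub_C_T_three_mul_one_add_C_T_one i), hG',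
    prod_mul_ofFun_eq_sum _ _ x Finset.univ fun i _ => hx i, supportedOn_univ]
  refine Finset.sum_congr rfl fun J _ => ?_
  rw [ofFun_slice_univ]
  simp only [hQ₀, hQ₁, Function.comp_def]
end

section
/- Let V : ℕ → ℤ[T,T⁻¹] satisfy the Jones recurrence V(m+2) = (T³ − T)·V(m+1) + T⁴·V(m) for all m. Suppose the pair (V(0), V(1)) is stable, i.e. deg V(1) > 1 + deg V(0) in WithBot ℤ. Then: (i) for every m, the pair (V(m), V(m+1)) is stable; (ii) for every m ≥ 1, deg V(m) = deg V(1) + 3·(m − 1); (iii) for every m ≥ 1, the leading coefficient of V(m) equals the leading coefficient of V(1). -/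
/-!
The top coefficient of `(T³ - T)·f + T⁴·g` in degree `deg f + 3` comes from `T³·f` alone:
`T·f` reaches only degree `deg f + 1`, and stability of `(g, f)` keeps `T⁴·g` below `deg f + 3`.
So the degree grows by exactly `3` and the leading coefficient is passed on unchanged,
while the new gap of `3 > 1` makes the next pair stable again; induction does the rest.
-/

/-- The degree of a Laurent polynomial `f`, viewed as a finitely supported function
`ℤ → ℤ`: the maximum of its support in `WithBot ℤ` (so `jdeg 0 = ⊥`). -/
noncomputable def jdeg (f : LaurentPolynomial ℤ) : WithBot ℤ :=
  (AddMonoidAlgebra.coeff f : ℤ →₀ ℤ).support.max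

/-- The leading coefficient of a Laurent polynomial: its coefficient at `jdeg f`
(for `f ≠ 0`; by convention `jcoeff 0 = 0`). -/
noncomputable def jcoeff (f : LaurentPolynomial ℤ) : ℤ :=
  (AddMonoidAlgebra.coeff f : ℤ →₀ ℤ) (((AddMonoidAlgebra.coeff f : ℤ →₀ ℤ).support.max).unbotD 0)

open LaurentPolynomial

namespace LaurentPolynomial

variable {f g : ℤ[T;T⁻¹]} {d : ℤ}

lemma coeff_eq_zero_of_jdeg_lt {n : ℤ} (h : jdeg f < n) : f.coeff n = 0 := by
  by_contra hn
  exact not_le.mpr h (Finset.le_max (Finsupp.mem_support_iff.mpr hn))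

lemma coeff_ne_zero_of_jdeg_eq (h : jdeg f = d) : f.coeff d ≠ 0 :=
  Finsupp.mem_support_iff.mp (Finset.mem_of_max h)

lemma jdeg_eq_of_coeff (hd : f.coeff d ≠ 0) (hgt : ∀ x, d < x → f.coeff x = 0) :
    jdeg f = d := by
  refine le_antisymm (Finset.max_le fun x hx => ?_)
    (Finset.le_max (Finsupp.mem_support_iff.mpr hd))
  by_contra hlt
  exact Finsupp.mem_support_iff.mp hx (hgt x (by exact_mod_cast not_le.mp hlt))

lemma jcoeff_eq_coeff_of_jdeg_eq (h : jdeg f = d) : jcoeff f = f.coeff d := by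
  simp only [jcoeff, show f.coeff.support.max = d from h, WithBot.unbotD_coe]

lemma coeff_T_mul (n y : ℤ) (f : ℤ[T;T⁻¹]) : (T n * f).coeff y = f.coeff (y - n) := by
  rw [T, AddMonoidAlgebra.coeff_single_mul_apply, one_mul, neg_add_eq_sub]

lemma coeff_jones_step (y : ℤ) (f g : ℤ[T;T⁻¹]) :
    ((T 3 - T 1) * f + T 4 * g).coeff y = f.coeff (y - 3) - f.coeff (y - 1) + g.coeff (y - 4) := by
  rw [sub_mul, AddMonoidAlgebra.coeff_add, AddMonoidAlgebra.coeff_sub]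
  simp only [Finsupp.add_apply, Finsupp.sub_apply, coeff_T_mul]

lemma coeff_eq_zero_of_one_add_jdeg_lt (h : 1 + jdeg g < d) {x : ℤ} (hx : d ≤ x + 1) :
    g.coeff x = 0 := by
  refine coeff_eq_zero_of_jdeg_lt ?_
  cases hg : jdeg g with
  | bot => exact WithBot.bot_lt_coe x
  | coe e =>
    rw [hg, ← WithBot.coe_one, ← WithBot.coe_add, WithBot.coe_lt_coe] at h
    exact WithBot.coe_lt_coe.mpr (by omega)

lemma jdeg_jones_step_of_stable (hf : jdeg f = d) (hg : 1 + jdeg g < d) :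
    jdeg ((T 3 - T 1) * f + T 4 * g) = ↑(d + 3) ∧
      jcoeff ((T 3 - T 1) * f + T 4 * g) = jcoeff f := by
  have hf_above : ∀ x, d < x → f.coeff x = 0 := fun x hx =>
    coeff_eq_zero_of_jdeg_lt (hf ▸ WithBot.coe_lt_coe.mpr hx)
  have htop : ((T 3 - T 1) * f + T 4 * g).coeff (d + 3) = f.coeff d := by
    rw [coeff_jones_step, add_sub_cancel_right, hf_above (d + 3 - 1) (by omega),
      coeff_eq_zero_of_one_add_jdeg_lt hg (by omega), sub_zero, add_zero]
  have hdeg : jdeg ((T 3 - T 1) * f + T 4 * g) = ↑(d + 3) := by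
    refine jdeg_eq_of_coeff (htop ▸ coeff_ne_zero_of_jdeg_eq hf) fun x hx => ?_
    rw [coeff_jones_step, hf_above _ (by omega), hf_above _ (by omega),
      coeff_eq_zero_of_one_add_jdeg_lt hg (by omega), sub_zero, add_zero]
  refine ⟨hdeg, ?_⟩
  rw [jcoeff_eq_coeff_of_jdeg_eq hdeg, htop, jcoeff_eq_coeff_of_jdeg_eq hf]

end LaurentPolynomial

lemma jones_stable_invariant (V : ℕ → ℤ[T;T⁻¹])
    (hV : ∀ m : ℕ, V (m + 2) = (T 3 - T 1) * V (m + 1) + T 4 * V m)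
    {d : ℤ} (hd : jdeg (V 1) = d) (hstab : 1 + jdeg (V 0) < d) (m : ℕ) :
    1 + jdeg (V m) < jdeg (V (m + 1)) ∧ jdeg (V (m + 1)) = ↑(d + 3 * m) ∧
      jcoeff (V (m + 1)) = jcoeff (V 1) := by
  induction m with
  | zero => simpa [hd] using hstab
  | succ m ih =>
    obtain ⟨hstab_m, hdeg_m, hcoeff_m⟩ := ih
    obtain ⟨hdeg, hcoeff⟩ := jdeg_jones_step_of_stable hdeg_m (hdeg_m ▸ hstab_m)
    refine ⟨?_, ?_, ?_⟩
    · rw [hdeg_m, hV, hdeg, ← WithBot.coe_one, ← WithBot.coe_add, WithBot.coe_lt_coe]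
      omega
    · rw [hV, hdeg]
      congr 1
      push_cast
      ring
    · rw [hV, hcoeff, hcoeff_m]

open LaurentPolynomial in
/-- **Proposition 3.2** (stable case). If `V` satisfies the Jones recurrence and the
pair `(V 0, V 1)` is stable (`deg V 1 > 1 + deg V 0`), then every pair
`(V m, V (m+1))` is stable, `deg V m = deg V 1 + 3(m−1)` for `m ≥ 1`, and the leading
coefficient of `V m` equals that of `V 1` for `m ≥ 1`. -/
theorem jones_stable_case (V : ℕ → LaurentPolynomial ℤ)
    (hV : ∀ m : ℕ, V (m + 2) = (T 3 - T 1) * V (m + 1) + T 4 * V m)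
    (hstab : 1 + jdeg (V 0) < jdeg (V 1)) :
    (∀ m : ℕ, 1 + jdeg (V m) < jdeg (V (m + 1))) ∧
    (∀ m : ℕ, 1 ≤ m → jdeg (V m) = jdeg (V 1) + ((3 * ((m : ℤ) - 1) : ℤ) : WithBot ℤ)) ∧
    (∀ m : ℕ, 1 ≤ m → jcoeff (V m) = jcoeff (V 1)) := by
  lift jdeg (V 1) to ℤ using ne_bot_of_gt hstab with d hd
  have key := jones_stable_invariant V hV hd.symm hstab
  refine ⟨fun m => (key m).1, fun m hm => ?_, fun m hm => ?_⟩
  · obtain ⟨k, rfl⟩ := Nat.exists_eq_add_of_le' hm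
    rw [(key k).2.1, ← WithBot.coe_add]
    congr 1
    push_cast
    ring
  · obtain ⟨k, rfl⟩ := Nat.exists_eq_add_of_le' hm
    exact (key k).2.2
end

section
/- Let V : ℕ → ℤ[T,T⁻¹] satisfy the Jones recurrence V(m+2) = (T³ − T)·V(m+1) + T⁴·V(m) for all m. Then: (a) for every e, ord V(e+2) ≥ 1 + min(ord V(e), ord V(e+1)) in WithTop ℤ; (b) for every e and every m ≥ 2, ord V(e+m) ≥ min(ord V(e), ord V(e+1)) + (m − 1); in particular, there exists e₀ such that for every e ≥ e₀ the support of V(e) is contained in the nonnegative integers (i.e. V(e) is a polynomial in T). -/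
/-- The order of a Laurent polynomial `f`, viewed as a finitely supported function
`ℤ → ℤ`: the minimum of its support in `WithTop ℤ` (so `jord 0 = ⊤`). -/
noncomputable def jord (f : LaurentPolynomial ℤ) : WithTop ℤ :=
  (f.coeff : ℤ →₀ ℤ).support.min

/-!
Multiplication by `T³ − T` raises the order by at least one and multiplication by `T⁴` by four,
so the recurrence gives `ord V(e+2) ≥ min(ord V(e+1) + 1, ord V(e) + 4)`. Feeding this two-term
estimate back into itself shows that the order grows at least linearly, with slope one, from
`min(ord V(e), ord V(e+1))`; hence it is eventually nonnegative.
-/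

open LaurentPolynomial

lemma jord_eq_inf (f : LaurentPolynomial ℤ) :
    jord f = f.coeff.support.inf ((↑) : ℤ → WithTop ℤ) :=
  Finset.min_eq_inf_withTop _

lemma le_jord_iff {f : LaurentPolynomial ℤ} {c : WithTop ℤ} :
    c ≤ jord f ↔ ∀ n ∈ f.coeff.support, c ≤ n :=
  Finset.le_min_iff

lemma jord_neg (f : LaurentPolynomial ℤ) : jord (-f) = jord f := by
  rw [jord, AddMonoidAlgebra.coeff_neg, Finsupp.support_neg, jord]

lemma min_jord_le_jord_add (f g : LaurentPolynomial ℤ) :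
    min (jord f) (jord g) ≤ jord (f + g) := by
  simpa only [jord_eq_inf] using
    AddMonoidAlgebra.le_inf_support_coeff_add ((↑) : ℤ → WithTop ℤ) f g

lemma min_jord_le_jord_sub (f g : LaurentPolynomial ℤ) :
    min (jord f) (jord g) ≤ jord (f - g) := by
  simpa only [sub_eq_add_neg, jord_neg] using min_jord_le_jord_add f (-g)

lemma jord_add_jord_le_jord_mul (f g : LaurentPolynomial ℤ) :
    jord f + jord g ≤ jord (f * g) := by
  simpa only [jord_eq_inf] using
    AddMonoidAlgebra.le_inf_support_coeff_mul (degt := ((↑) : ℤ → WithTop ℤ))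
      (fun a b => (WithTop.coe_add a b).ge) f g

lemma jord_T (n : ℤ) : jord (T n : LaurentPolynomial ℤ) = n := by
  rw [jord, T, AddMonoidAlgebra.coeff_single, Finsupp.support_single n one_ne_zero,
    Finset.min_singleton]

lemma one_le_jord_T_three_sub_T_one : 1 ≤ jord (T 3 - T 1 : LaurentPolynomial ℤ) := by
  refine le_trans ?_ (min_jord_le_jord_sub _ _)
  rw [jord_T, jord_T]
  decide

theorem min_add_natCast_le_of_min_add_le {α : Type*} [AddCommMonoidWithOne α] [LinearOrder α]
    [IsOrderedAddMonoid α] [ZeroLEOneClass α] (a : ℕ → α)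
    (h : ∀ n, min (a (n + 1) + 1) (a n + 2) ≤ a (n + 2)) :
    ∀ k : ℕ, min (a 0) (a 1) + k ≤ a (k + 1)
  | 0 => by simp
  | 1 => by
    refine le_trans (le_min ?_ ?_) (h 0)
    · simpa using add_le_add_left (min_le_right (a 0) (a 1)) 1
    · simpa using add_le_add (min_le_left (a 0) (a 1)) one_le_two
  | k + 2 => by
    refine le_trans (le_min ?_ ?_) (h (k + 1))
    · simpa [add_assoc, one_add_one_eq_two] using
        add_le_add_left (min_add_natCast_le_of_min_add_le a h (k + 1)) 1
    · simpa [add_assoc] using add_le_add_left (min_add_natCast_le_of_min_add_le a h k) 2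

section Jones

variable {V : ℕ → LaurentPolynomial ℤ}

lemma jord_jones_step (hV : ∀ m : ℕ, V (m + 2) = (T 3 - T 1) * V (m + 1) + T 4 * V m)
    (e : ℕ) :
    min (jord (V (e + 1)) + 1) (jord (V e) + 4) ≤ jord (V (e + 2)) := by
  rw [hV e]
  refine le_trans (min_le_min ?_ ?_) (min_jord_le_jord_add _ _)
  · calc jord (V (e + 1)) + 1 ≤ jord (T 3 - T 1) + jord (V (e + 1)) := by
          rw [add_comm]; gcongr; exact one_le_jord_T_three_sub_T_one
      _ ≤ _ := jord_add_jord_le_jord_mul _ _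
  · simpa [jord_T, add_comm] using jord_add_jord_le_jord_mul (T 4) (V e)

lemma min_jord_add_natCast_le (hV : ∀ m : ℕ, V (m + 2) = (T 3 - T 1) * V (m + 1) + T 4 * V m)
    (e k : ℕ) : min (jord (V e)) (jord (V (e + 1))) + k ≤ jord (V (e + k + 1)) := by
  refine min_add_natCast_le_of_min_add_le (fun n => jord (V (e + n))) (fun n => ?_) k
  simp only [← add_assoc]
  refine (min_le_min le_rfl ?_).trans (jord_jones_step hV (e + n))
  gcongr
  exact_mod_cast (show (2 : ℤ) ≤ 4 by norm_num)

end Jones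

lemma WithTop.exists_forall_ge_nonneg_add_natCast (μ : WithTop ℤ) :
    ∃ N : ℕ, ∀ k ≥ N, 0 ≤ μ + k := by
  induction μ using WithTop.recTopCoe with
  | top => exact ⟨0, fun k _ => by simp⟩
  | coe c => exact ⟨(-c).toNat, fun k hk => by norm_cast; omega⟩

open LaurentPolynomial in
/-- **Proposition 3.5**. If `V` satisfies the Jones recurrence, then
(a) `ord V(e+2) ≥ 1 + min(ord V(e), ord V(e+1))` for every `e`;
(b) `ord V(e+m) ≥ min(ord V(e), ord V(e+1)) + (m−1)` for every `e` and `m ≥ 2`;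
in particular, for all large `e`, the support of `V e` consists of nonnegative
integers, i.e. `V e` is a polynomial in `T`. -/
theorem jones_order_increasing (V : ℕ → LaurentPolynomial ℤ)
    (hV : ∀ m : ℕ, V (m + 2) = (T 3 - T 1) * V (m + 1) + T 4 * V m) :
    (∀ e : ℕ, 1 + min (jord (V e)) (jord (V (e + 1))) ≤ jord (V (e + 2))) ∧
    (∀ e m : ℕ, 2 ≤ m →
      min (jord (V e)) (jord (V (e + 1))) + (((m : ℤ) - 1 : ℤ) : WithTop ℤ) ≤
        jord (V (e + m))) ∧
    (∃ e₀ : ℕ, ∀ e : ℕ, e₀ ≤ e → ∀ n ∈ ((V e).coeff : ℤ →₀ ℤ).support, 0 ≤ n) := by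
  have growth : ∀ e m : ℕ, 1 ≤ m →
      min (jord (V e)) (jord (V (e + 1))) + (((m : ℤ) - 1 : ℤ) : WithTop ℤ) ≤
        jord (V (e + m)) := by
    rintro e m hm
    obtain ⟨k, rfl⟩ := Nat.exists_eq_add_of_le' hm
    simpa [← add_assoc] using min_jord_add_natCast_le hV e k
  refine ⟨fun e => ?_, fun e m hm => growth e m (by omega), ?_⟩
  · simpa [add_comm] using growth e 2 one_le_two
  · obtain ⟨N, hN⟩ := (min (jord (V 0)) (jord (V 1))).exists_forall_ge_nonneg_add_natCast
    refine ⟨N + 1, fun e he n hn => ?_⟩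
    obtain ⟨k, rfl⟩ := Nat.exists_eq_add_of_le' (show 1 ≤ e by omega)
    have hpos : 0 ≤ jord (V (k + 1)) :=
      (hN k (by omega)).trans (by simpa using min_jord_add_natCast_le hV 0 k)
    exact_mod_cast le_jord_iff.mp hpos n hn
end

section
/- Let V : ℤ → ℤ[T,T⁻¹] satisfy the Jones recurrence V(e+2) = (T³ − T)·V(e+1) + T⁴·V(e) for all e : ℤ, and suppose V(e) ≠ 0 for every e. Then for every N : ℤ there exists e₀ such that for all e ≥ e₀ one has deg V(e) ≥ N; moreover there exists e₁ such that for all e ≥ e₁ the support of V(e) is contained in the nonnegative integers (V(e) is a polynomial in T). In particular deg V(e) → +∞ as e → +∞. -/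
/-!
The characteristic polynomial `X² - (T³ - T) X - T⁴` of the recurrence has the roots `T³` and `-T`,
so with `P = V 1 + T V 0` and `Q = V 1 - T³ V 0` one has `(T³ + T) V n = P T^{3n} - (-1)ⁿ Q Tⁿ` for
`n ≥ 0`. Multiplication by `T³ + T = T (1 + T²)` raises the degree by at most `3` and the lowest
exponent by exactly `1`. If `P ≠ 0`, a coefficient of `P` shifted by `3n` survives on the right once
the copy of `Q` shifted by only `n` has fallen below it; if `P = 0`, then `Q ≠ 0` because `V 0 ≠ 0`.
For large `n` both terms on the right live in positive degrees.
-/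

open LaurentPolynomial Filter

theorem sub_mul_eq_of_recurrence_s11 {R : Type*} [CommRing R] {a b : R} {u : ℕ → R}
    (hu : ∀ n, u (n + 2) = (a + b) * u (n + 1) - a * b * u n) :
    ∀ n, (a - b) * u n = (u 1 - b * u 0) * a ^ n - (u 1 - a * u 0) * b ^ n
  | 0 => by ring
  | 1 => by ring
  | n + 2 => by
    linear_combination (a - b) * hu n + (a + b) * sub_mul_eq_of_recurrence_s11 hu (n + 1) -
      a * b * sub_mul_eq_of_recurrence_s11 hu n

namespace LaurentPolynomial

variable {R : Type*} [Semiring R]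

theorem coeff_mul_T (f : R[T;T⁻¹]) (k n : ℤ) : (f * T k).coeff n = f.coeff (n - k) := by
  simpa [sub_eq_add_neg] using AddMonoidAlgebra.coeff_mul_single_apply f 1 k n

theorem coeff_C_mul (r : R) (f : R[T;T⁻¹]) (n : ℤ) : (C r * f).coeff n = r * f.coeff n :=
  AddMonoidAlgebra.coeff_single_zero_mul f r n

theorem eventually_atTop_coeff_eq_zero (f : R[T;T⁻¹]) : ∀ᶠ n in atTop, f.coeff n = 0 := by
  filter_upwards [atTop_le_cofinite f.coeff.support.eventually_cofinite_notMem] with n hn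
  exact Finsupp.notMem_support_iff.1 hn

theorem eventually_atBot_coeff_eq_zero (f : R[T;T⁻¹]) : ∀ᶠ n in atBot, f.coeff n = 0 := by
  filter_upwards [atBot_le_cofinite f.coeff.support.eventually_cofinite_notMem] with n hn
  exact Finsupp.notMem_support_iff.1 hn

theorem le_degree_of_coeff_ne_zero {f : R[T;T⁻¹]} {n : ℤ} (h : f.coeff n ≠ 0) :
    (n : WithBot ℤ) ≤ f.degree :=
  Finset.le_max (Finsupp.mem_support_iff.2 h)

theorem tendsto_degree_atTop_of_le {ι : Type*} {l : Filter ι} {f : ι → R[T;T⁻¹]} {s : ι → ℤ}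
    (hs : Tendsto s l atTop) (hf : ∀ᶠ i in l, (s i : WithBot ℤ) ≤ (f i).degree) :
    Tendsto (fun i => (f i).degree) l atTop :=
  tendsto_atTop_mono' l hf <| (tendsto_atTop_atTop_of_monotone WithBot.coe_mono fun b =>
    WithBot.recBotCoe ⟨0, bot_le⟩ (fun N => ⟨N, le_rfl⟩) b).comp hs

theorem coeff_T_three_add_T_one_mul (f : R[T;T⁻¹]) (n : ℤ) :
    ((T 3 + T 1) * f).coeff n = f.coeff (n - 3) + f.coeff (n - 1) := by
  rw [add_mul, T_mul, T_mul, AddMonoidAlgebra.coeff_add, Finsupp.add_apply, coeff_mul_T,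
    coeff_mul_T]

theorem le_degree_of_coeff_T_three_add_T_one_mul_ne_zero {f : R[T;T⁻¹]} {n : ℤ}
    (h : ((T 3 + T 1) * f).coeff n ≠ 0) : ((n - 3 : ℤ) : WithBot ℤ) ≤ f.degree := by
  rw [coeff_T_three_add_T_one_mul] at h
  by_cases h3 : f.coeff (n - 3) = 0
  · rw [h3, zero_add] at h
    exact (WithBot.coe_le_coe.2 (by omega)).trans (le_degree_of_coeff_ne_zero h)
  · exact le_degree_of_coeff_ne_zero h3

theorem le_of_mem_support_of_T_three_add_T_one_mul {f : R[T;T⁻¹]} {c : ℤ}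
    (h : ∀ n ∈ ((T 3 + T 1) * f).coeff.support, c < n) : ∀ n ∈ f.coeff.support, c ≤ n := by
  intro n hn
  set m := f.coeff.support.min' ⟨n, hn⟩
  have hm : f.coeff m ≠ 0 := Finsupp.mem_support_iff.1 (Finset.min'_mem _ _)
  have hm2 : f.coeff (m - 2) = 0 :=
    Finsupp.notMem_support_iff.1 fun h' => by have := Finset.min'_le _ _ h'; omega
  have hm1 : m + 1 ∈ ((T 3 + T 1) * f).coeff.support := by
    rw [Finsupp.mem_support_iff, coeff_T_three_add_T_one_mul, show m + 1 - 3 = m - 2 by ring,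
      add_sub_cancel_right, hm2, zero_add]
    exact hm
  have := h _ hm1
  have := Finset.min'_le _ _ hn
  omega

theorem eq_zero_of_T_three_add_T_one_mul_eq_zero {f : R[T;T⁻¹]} (h : (T 3 + T 1) * f = 0) :
    f = 0 := by
  ext n
  by_contra hn
  have := le_of_mem_support_of_T_three_add_T_one_mul (c := n + 1) (by simp [h]) n
    (Finsupp.mem_support_iff.2 hn)
  omega

end LaurentPolynomial

section JonesRecurrence

variable {R : Type*} [CommRing R]

def JonesRecurrence (V : ℤ → R[T;T⁻¹]) : Prop :=
  ∀ e : ℤ, V (e + 2) = (T 3 - T 1) * V (e + 1) + T 4 * V e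

variable {V : ℤ → R[T;T⁻¹]}

theorem JonesRecurrence.T_three_add_T_one_mul_eq (hV : JonesRecurrence V) (n : ℕ) :
    (T 3 + T 1) * V n =
      (V 1 + T 1 * V 0) * T (3 * n) - (-1) ^ n * ((V 1 - T 3 * V 0) * T n) := by
  have hT4 : (T 4 : R[T;T⁻¹]) = T 3 * T 1 := by rw [← T_add]; norm_num
  have h := sub_mul_eq_of_recurrence_s11 (a := T 3) (b := -T 1) (u := fun n : ℕ => V n)
    (fun n => by push_cast; rw [hV, hT4]; ring) n
  simp only [Nat.cast_zero, Nat.cast_one, neg_pow (T 1 : R[T;T⁻¹]), T_pow, mul_one] at h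
  rw [mul_comm 3]
  linear_combination h

theorem JonesRecurrence.coeff_T_three_add_T_one_mul (hV : JonesRecurrence V) (n : ℕ) (k : ℤ) :
    ((T 3 + T 1) * V n).coeff k =
      (V 1 + T 1 * V 0).coeff (k - 3 * n) - (-1) ^ n * (V 1 - T 3 * V 0).coeff (k - n) := by
  rw [hV.T_three_add_T_one_mul_eq, ← map_one C, ← map_neg, ← map_pow,
    AddMonoidAlgebra.coeff_sub, Finsupp.sub_apply, coeff_C_mul, coeff_mul_T, coeff_mul_T]

theorem JonesRecurrence.tendsto_degree (hV : JonesRecurrence V) (h0 : V 0 ≠ 0) :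
    Tendsto (fun n : ℕ => (V n).degree) atTop atTop := by
  have hform := hV.T_three_add_T_one_mul_eq 0
  have hcoeff := hV.coeff_T_three_add_T_one_mul
  set P := V 1 + T 1 * V 0
  set Q := V 1 - T 3 * V 0
  by_cases hP : P = 0
  · have hQ : Q ≠ 0 := fun hQ => h0 <| eq_zero_of_T_three_add_T_one_mul_eq_zero <| by
      simpa [hP, hQ] using hform
    obtain ⟨d, hd⟩ := Finsupp.support_nonempty_iff.2 (AddMonoidAlgebra.coeff_eq_zero.not.2 hQ)
    refine tendsto_degree_atTop_of_le (s := fun n : ℕ => d + n - 3)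
      (tendsto_atTop_atTop.2 fun N => ⟨(N - d + 3).toNat, fun n hn => by omega⟩)
      (Eventually.of_forall fun n => le_degree_of_coeff_T_three_add_T_one_mul_ne_zero ?_)
    rw [hcoeff, hP, add_sub_cancel_right]
    simpa using Finsupp.mem_support_iff.1 hd
  · obtain ⟨d, hd⟩ := Finsupp.support_nonempty_iff.2 (AddMonoidAlgebra.coeff_eq_zero.not.2 hP)
    obtain ⟨b, hb⟩ := eventually_atTop.1 (eventually_atTop_coeff_eq_zero Q)
    refine tendsto_degree_atTop_of_le (s := fun n : ℕ => d + 3 * n - 3)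
      (tendsto_atTop_atTop.2 fun N => ⟨(N - d + 3).toNat, fun n hn => by omega⟩) ?_
    filter_upwards [eventually_ge_atTop (b - d).toNat] with n hn
    refine le_degree_of_coeff_T_three_add_T_one_mul_ne_zero ?_
    rw [hcoeff, add_sub_cancel_right, hb _ (by omega), mul_zero, sub_zero]
    exact Finsupp.mem_support_iff.1 hd

theorem JonesRecurrence.eventually_support_nonneg (hV : JonesRecurrence V) :
    ∀ᶠ n : ℕ in atTop, ∀ k ∈ (V n).coeff.support, 0 ≤ k := by
  obtain ⟨a, ha⟩ := eventually_atBot.1 (eventually_atBot_coeff_eq_zero (V 1 + T 1 * V 0))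
  obtain ⟨b, hb⟩ := eventually_atBot.1 (eventually_atBot_coeff_eq_zero (V 1 - T 3 * V 0))
  filter_upwards [eventually_ge_atTop (-a).toNat, eventually_ge_atTop (-b).toNat] with n hna hnb
  refine le_of_mem_support_of_T_three_add_T_one_mul fun k hk => ?_
  by_contra! hk0
  rw [Finsupp.mem_support_iff, hV.coeff_T_three_add_T_one_mul, ha _ (by omega),
    hb _ (by omega), mul_zero, sub_zero] at hk
  exact hk rfl

end JonesRecurrence

open LaurentPolynomial in
/-- **Proposition 1.4** (algebraic form). If `V : ℤ → ℤ[T,T⁻¹]` satisfies the Jones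
recurrence and `V e ≠ 0` for every `e`, then `deg V(e) → +∞` as `e → +∞`, and for
all large `e` the support of `V e` consists of nonnegative integers (`V e` is a
polynomial in `T`). -/
theorem jones_degree_tendsto_atTop (V : ℤ → LaurentPolynomial ℤ)
    (hV : ∀ e : ℤ, V (e + 2) = (T 3 - T 1) * V (e + 1) + T 4 * V e)
    (hne : ∀ e : ℤ, V e ≠ 0) :
    (∀ N : ℤ, ∃ e₀ : ℤ, ∀ e : ℤ, e₀ ≤ e → (N : WithBot ℤ) ≤ jdeg (V e)) ∧
    (∃ e₁ : ℤ, ∀ e : ℤ, e₁ ≤ e → ∀ n ∈ (AddMonoidAlgebra.coeff (V e) : ℤ →₀ ℤ).support, 0 ≤ n) ∧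
    Filter.Tendsto (fun e : ℤ => jdeg (V e)) Filter.atTop Filter.atTop := by
  have hJ : JonesRecurrence V := hV
  have hdeg : Tendsto (fun e : ℤ => jdeg (V e)) atTop atTop := by
    rw [← Nat.map_cast_int_atTop, tendsto_map'_iff]
    exact hJ.tendsto_degree (hne 0)
  have hsupp : ∀ᶠ e : ℤ in atTop, ∀ n ∈ (V e).coeff.support, 0 ≤ n := by
    rw [← Nat.map_cast_int_atTop, eventually_map]
    exact hJ.eventually_support_nonneg
  exact ⟨fun N => eventually_atTop.1 (hdeg.eventually_ge_atTop N), eventually_atTop.1 hsupp, hdeg⟩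
end

section
/- Let V : ℤ → ℤ[T,T⁻¹] satisfy the Jones recurrence V(e+2) = (T³ − T)·V(e+1) + T⁴·V(e) for all e : ℤ. (a) If for some e both V(e) and V(e+1) have support contained in the nonnegative integers (they are polynomials in T), then for every k ≥ 2, V(e+k) has support contained in the nonnegative integers and V(e+k) ≠ 1. (b) If for some e both V(e) and V(e−1) have support contained in the nonpositive integers (they are polynomials in T⁻¹), then for every k ≥ 2, V(e−k) has support contained in the nonpositive integers and V(e−k) ≠ 1. -/
/-!
Write `P_b` for the Laurent polynomials whose exponents are all `≥ b`. Since
`(T³ - T) · P_0 + T⁴ · P_0 ⊆ P_1 ⊆ P_0`, two consecutive terms in `P_0` force every term at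
least two steps later into `P_1`, where the constant coefficient vanishes.
Part (b) is part (a) for `e ↦ invert (V (-e))`: reversing the index and substituting
`T ↦ T⁻¹` preserves the Jones recurrence, because `T⁴` times `T⁻³ - T⁻¹` is `T - T³`.
-/

namespace LaurentPolynomial

open AddMonoidAlgebra

variable {R : Type*}

lemma T_mul_mem_supported_Ici [Semiring R] {a b : ℤ} {f : R[T;T⁻¹]}
    (hf : f ∈ supported R R (Set.Ici b)) : T a * f ∈ supported R R (Set.Ici (a + b)) := by
  rw [mem_supported'] at hf ⊢
  intro m hm
  rw [T, coeff_single_mul_apply, hf _ (by simp at hm ⊢; omega), mul_zero]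

lemma invert_mem_supported_iff [CommSemiring R] {s : Set ℤ} {f : R[T;T⁻¹]} :
    invert f ∈ supported R R s ↔ f ∈ supported R R (-s) := by
  simp only [mem_supported', invert_apply]
  exact ⟨fun h m hm => by simpa using h (-m) hm, fun h m hm => h (-m) (by simpa using hm)⟩

lemma ne_one_of_mem_supported [Semiring R] [Nontrivial R] {s : Set ℤ} {f : R[T;T⁻¹]}
    (hf : f ∈ supported R R s) (hs : 0 ∉ s) : f ≠ 1 := by
  rintro rfl
  simpa using mem_supported'.1 hf 0 hs

section JonesRecurrence

variable [CommRing R]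

def SatisfiesJonesRecurrence (V : ℤ → R[T;T⁻¹]) : Prop :=
  ∀ e, V (e + 2) = (T 3 - T 1) * V (e + 1) + T 4 * V e

lemma jonesStep_mem_supported_Ici_one {f g : R[T;T⁻¹]} (hf : f ∈ supported R R (Set.Ici 0))
    (hg : g ∈ supported R R (Set.Ici 0)) :
    (T 3 - T 1) * f + T 4 * g ∈ supported R R (Set.Ici 1) := by
  have shift {a : ℤ} (ha : 1 ≤ a) {h : R[T;T⁻¹]} (hh : h ∈ supported R R (Set.Ici 0)) :
      T a * h ∈ supported R R (Set.Ici 1) :=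
    supported_mono (Set.Ici_subset_Ici.2 (by omega)) (T_mul_mem_supported_Ici hh)
  rw [sub_mul]
  exact add_mem (sub_mem (shift (by norm_num) hf) (shift le_rfl hf)) (shift (by norm_num) hg)

namespace SatisfiesJonesRecurrence

variable {V : ℤ → R[T;T⁻¹]} (hV : SatisfiesJonesRecurrence V)
include hV

lemma invert_neg : SatisfiesJonesRecurrence fun e => invert (V (-e)) := by
  intro e
  have h := hV (-e - 2)
  rw [show -e - 2 + 2 = -e by ring, show -e - 2 + 1 = -(e + 1) by ring,
    show -e - 2 = -(e + 2) by ring] at h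
  apply invert.injective
  apply (isUnit_T (R := R) 4).mul_left_cancel
  simp only [map_add, map_mul, map_sub, invert_T, involutive_invert _, mul_add, mul_sub,
    ← mul_assoc, ← T_add]
  norm_num only [T_zero, one_mul]
  linear_combination -h

lemma add_two_mem_supported_Ici_one {e : ℤ} (h₀ : V e ∈ supported R R (Set.Ici 0))
    (h₁ : V (e + 1) ∈ supported R R (Set.Ici 0)) : V (e + 2) ∈ supported R R (Set.Ici 1) :=
  hV e ▸ jonesStep_mem_supported_Ici_one h₁ h₀

lemma add_mem_supported_Ici_one {e : ℤ} (h₀ : V e ∈ supported R R (Set.Ici 0))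
    (h₁ : V (e + 1) ∈ supported R R (Set.Ici 0)) {k : ℕ} (hk : 2 ≤ k) :
    V (e + k) ∈ supported R R (Set.Ici 1) := by
  have consecutive (j : ℕ) : V (e + j) ∈ supported R R (Set.Ici 0) ∧
      V (e + j + 1) ∈ supported R R (Set.Ici 0) := by
    induction j with
    | zero => simpa using ⟨h₀, h₁⟩
    | succ j ih =>
      rw [Nat.cast_succ, ← add_assoc, show e + j + 1 + 1 = e + j + 2 by ring]
      exact ⟨ih.2, supported_mono (Set.Ici_subset_Ici.2 zero_le_one)
        (hV.add_two_mem_supported_Ici_one ih.1 ih.2)⟩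
  obtain ⟨j, rfl⟩ := Nat.exists_eq_add_of_le' hk
  rw [Nat.cast_add, ← add_assoc]
  exact hV.add_two_mem_supported_Ici_one (consecutive j).1 (consecutive j).2

lemma sub_mem_supported_Iic_neg_one {e : ℤ} (h₀ : V e ∈ supported R R (Set.Iic 0))
    (h₁ : V (e - 1) ∈ supported R R (Set.Iic 0)) {k : ℕ} (hk : 2 ≤ k) :
    V (e - k) ∈ supported R R (Set.Iic (-1)) := by
  have h := hV.invert_neg.add_mem_supported_Ici_one (e := -e)
    (by simpa [invert_mem_supported_iff] using h₀)
    (by simpa [invert_mem_supported_iff, neg_add_eq_sub] using h₁) hk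
  simpa [invert_mem_supported_iff, neg_add_eq_sub] using h

end SatisfiesJonesRecurrence

end JonesRecurrence

end LaurentPolynomial

open LaurentPolynomial in
/-- **Proposition 5.1**. Let `V : ℤ → ℤ[T,T⁻¹]` satisfy the Jones recurrence.
(a) If `V e` and `V (e+1)` are polynomials in `T` (support in the nonnegative
integers), then for every `k ≥ 2`, `V (e+k)` is a polynomial in `T` different
from `1`. (b) If `V e` and `V (e−1)` are polynomials in `T⁻¹` (support in the
nonpositive integers), then for every `k ≥ 2`, `V (e−k)` is a polynomial in `T⁻¹`
different from `1`. -/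
theorem jones_unit_avoidance (V : ℤ → LaurentPolynomial ℤ)
    (hV : ∀ e : ℤ, V (e + 2) = (T 3 - T 1) * V (e + 1) + T 4 * V e) :
    (∀ e : ℤ,
      (∀ n ∈ (V e).coeff.support, 0 ≤ n) →
      (∀ n ∈ (V (e + 1)).coeff.support, 0 ≤ n) →
      ∀ k : ℕ, 2 ≤ k →
        (∀ n ∈ (V (e + k)).coeff.support, 0 ≤ n) ∧ V (e + k) ≠ 1) ∧
    (∀ e : ℤ,
      (∀ n ∈ (V e).coeff.support, n ≤ 0) →
      (∀ n ∈ (V (e - 1)).coeff.support, n ≤ 0) →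
      ∀ k : ℕ, 2 ≤ k →
        (∀ n ∈ (V (e - k)).coeff.support, n ≤ 0) ∧ V (e - k) ≠ 1) := by
  have hJ : SatisfiesJonesRecurrence V := hV
  refine ⟨fun e h₀ h₁ k hk => ?_, fun e h₀ h₁ k hk => ?_⟩
  · have h := hJ.add_mem_supported_Ici_one (e := e) h₀ h₁ hk
    exact ⟨AddMonoidAlgebra.supported_mono (Set.Ici_subset_Ici.2 zero_le_one) h,
      ne_one_of_mem_supported h (by simp)⟩
  · have h := hJ.sub_mem_supported_Iic_neg_one (e := e) h₀ h₁ hk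
    exact ⟨AddMonoidAlgebra.supported_mono (Set.Iic_subset_Iic.2 (by norm_num)) h,
      ne_one_of_mem_supported h (by simp)⟩
end

section
/- Let V : ℤ → ℤ[T,T⁻¹] satisfy the Jones recurrence V(e+2) = (T³ − T)·V(e+1) + T⁴·V(e) for all e : ℤ. Then the set {e : ℤ | V(e) = 1} has at most two elements, and whenever V(a) = 1 and V(b) = 1 with a ≤ b, one has b − a ≤ 2. -/
open LaurentPolynomial Polynomial

private lemma jones_rec_t (V : ℤ → LaurentPolynomial ℤ)
    (hV : ∀ e : ℤ, V (e + 2) = (T 3 - T 1) * V (e + 1) + T 4 * V e) (e : ℤ) :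
    V (e + 2) = ((T 1 : LaurentPolynomial ℤ)^3 - T 1) * V (e + 1) + (T 1)^4 * V e := by
  have h3 : (T 1 : LaurentPolynomial ℤ)^3 = T 3 := by rw [T_pow]; norm_num
  have h4 : (T 1 : LaurentPolynomial ℤ)^4 = T 4 := by rw [T_pow]; norm_num
  rw [h3, h4]; exact hV e

private lemma jones_WU (V : ℤ → LaurentPolynomial ℤ)
    (hV : ∀ e : ℤ, V (e + 2) = (T 3 - T 1) * V (e + 1) + T 4 * V e) (a : ℤ) :
    ∀ n : ℕ,
      (V (a + 1 + n) + T 1 * V (a + n)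
          = (T 1)^(3*n) * (V (a+1) + T 1 * V a)) ∧
      (V (a + 1 + n) - (T 1)^3 * V (a + n)
          = (-1)^n * (T 1)^n * (V (a+1) - (T 1)^3 * V a)) := by
  intro n
  induction n with
  | zero => simp
  | succ n ih =>
    obtain ⟨ih1, ih2⟩ := ih
    have key := jones_rec_t V hV (a + n)
    have e4 : a + (n:ℤ) + 1 = a + 1 + n := by ring
    rw [e4] at key
    have e1 : a + 1 + ((n:ℤ) + 1) = a + (n:ℤ) + 2 := by ring
    have e2 : a + ((n:ℤ) + 1) = a + 1 + (n:ℤ) := by ring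
    push_cast
    rw [e1, e2]
    constructor
    · linear_combination key + (T 1 : LaurentPolynomial ℤ)^3 * ih1
    · linear_combination key - (T 1 : LaurentPolynomial ℤ) * ih2

private lemma jones_key_ident (V : ℤ → LaurentPolynomial ℤ)
    (hV : ∀ e : ℤ, V (e + 2) = (T 3 - T 1) * V (e + 1) + T 4 * V e)
    (a : ℤ) (n : ℕ) (ha : V a = 1) (hb : V (a + n) = 1) :
    V (a+1) * ((T 1 : LaurentPolynomial ℤ)^(3*n) - (-1)^n * (T 1)^n)
      = T 1 + (T 1)^3 - (T 1)^(3*n) * T 1 - (-1)^n * (T 1)^(n+3) := by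
  obtain ⟨h1, h2⟩ := jones_WU V hV a n
  rw [ha, hb] at h1 h2
  linear_combination h2 - h1

private lemma jones_no_far (V : ℤ → LaurentPolynomial ℤ)
    (hV : ∀ e : ℤ, V (e + 2) = (T 3 - T 1) * V (e + 1) + T 4 * V e)
    (a : ℤ) (n : ℕ) (hn : 3 ≤ n) (ha : V a = 1) (hb : V (a + n) = 1) : False := by
  have hid := jones_key_ident V hV a n ha hb
  obtain ⟨k, p, hp⟩ := (V (a+1)).exists_T_pow
  have hTk : (T 1 : LaurentPolynomial ℤ)^k = T k := by rw [T_pow]; norm_num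
  have hpoly : p * (X^(3*n) - (-1)^n * X^n)
      = X^(k+1) + X^(k+3) - X^(3*n+k+1) - (-1)^n * X^(n+k+3) := by
    apply Polynomial.toLaurent_injective
    simp only [map_mul, map_sub, map_add, map_pow, map_one, map_neg, Polynomial.toLaurent_X]
    rw [hp, ← hTk]
    linear_combination (T 1 : LaurentPolynomial ℤ)^k * hid
  set ε : ℤ := (-1)^n with hεdef
  have hCε : (Polynomial.C ε : ℤ[X]) = (-1)^n := by simp [hεdef]
  have hεsq : (Polynomial.C ε : ℤ[X]) * Polynomial.C ε = 1 := by
    rw [← Polynomial.C_mul, hεdef, ← mul_pow]; norm_num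
  have hP : (X^(2*n) - Polynomial.C ε : ℤ[X]) ∣ X^(k+1) * (1 + X^2 - X^(3*n) - Polynomial.C ε * X^(n+2)) := by
    refine ⟨p * X^n, ?_⟩
    rw [hCε]
    linear_combination hpoly.symm
  have hx1 : (X:ℤ[X])^(2*n-1) * X = X^(2*n) := by
    rw [← pow_succ]; congr 1; omega
  have hcop : IsCoprime (X^(2*n) - Polynomial.C ε : ℤ[X]) (X : ℤ[X]) := by
    refine ⟨Polynomial.C (-ε), Polynomial.C ε * X^(2*n-1), ?_⟩
    rw [map_neg]
    linear_combination Polynomial.C ε * hx1 + hεsq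
  have hdvdR : (X^(2*n) - Polynomial.C ε : ℤ[X]) ∣ (1 + X^2 - X^(3*n) - Polynomial.C ε * X^(n+2)) :=
    (hcop.pow_right).dvd_of_dvd_mul_left hP
  have hdvdr : (X^(2*n) - Polynomial.C ε : ℤ[X]) ∣ (1 + X^2 - Polynomial.C ε * X^n - Polynomial.C ε * X^(n+2)) := by
    have hre : (1 + X^2 - Polynomial.C ε * X^n - Polynomial.C ε * X^(n+2) : ℤ[X])
        = (1 + X^2 - X^(3*n) - Polynomial.C ε * X^(n+2)) + (X^(2*n) - Polynomial.C ε) * X^n := by ring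
    rw [hre]
    exact dvd_add hdvdR (dvd_mul_right _ _)
  have hmon : (X^(2*n) - Polynomial.C ε : ℤ[X]).Monic := Polynomial.monic_X_pow_sub_C ε (by omega)
  obtain ⟨q, hq⟩ := hdvdr
  have hr0 : (1 + X^2 - Polynomial.C ε * X^n - Polynomial.C ε * X^(n+2) : ℤ[X]) ≠ 0 := by
    intro h
    have h0 := congrArg (fun f => Polynomial.coeff f 0) h
    simp only [Polynomial.coeff_add, Polynomial.coeff_sub, Polynomial.coeff_one,
      Polynomial.coeff_X_pow, Polynomial.coeff_C_mul, Polynomial.coeff_zero] at h0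
    rw [if_neg (by omega : ¬ (0 = 2)), if_neg (by omega : ¬ (0 = n)),
      if_neg (by omega : ¬ (0 = n+2))] at h0
    norm_num at h0
  have hq0 : q ≠ 0 := by
    rintro rfl
    rw [mul_zero] at hq
    exact hr0 hq
  have hdeg : (1 + X^2 - Polynomial.C ε * X^n - Polynomial.C ε * X^(n+2) : ℤ[X]).natDegree ≤ n + 2 := by
    compute_degree
  rw [hq, natDegree_mul hmon.ne_zero hq0, natDegree_X_pow_sub_C] at hdeg
  omega

private lemma jones_T_ne : (T 3 - T 1 + T 4 : LaurentPolynomial ℤ) ≠ 1 := by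
  intro h
  have h' : Polynomial.toLaurent ((X:ℤ[X])^3 - X + X^4)
      = Polynomial.toLaurent (1 : ℤ[X]) := by
    simp only [map_sub, map_add, map_one, Polynomial.toLaurent_X_pow, Polynomial.toLaurent_X]
    norm_num
    exact h
  have h2 := Polynomial.toLaurent_injective h'
  have h3 := congrArg (Polynomial.eval 2) h2
  norm_num at h3

open LaurentPolynomial in
/-- **Lemma 5.3** (key step of Theorem 1.7). If `V : ℤ → ℤ[T,T⁻¹]` satisfies the
Jones recurrence, then the set of indices `e` with `V e = 1` has at most two
elements, and any two such indices differ by at most `2`. -/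
theorem jones_at_most_two_units (V : ℤ → LaurentPolynomial ℤ)
    (hV : ∀ e : ℤ, V (e + 2) = (T 3 - T 1) * V (e + 1) + T 4 * V e) :
    {e : ℤ | V e = 1}.encard ≤ 2 ∧
    (∀ a b : ℤ, V a = 1 → V b = 1 → a ≤ b → b - a ≤ 2) := by
  have part2 : ∀ a b : ℤ, V a = 1 → V b = 1 → a ≤ b → b - a ≤ 2 := by
    intro a b ha hb hab
    by_contra hcon
    push_neg at hcon
    have hbn : b = a + ((b - a).toNat : ℤ) := by omega
    exact jones_no_far V hV a (b-a).toNat (by omega) ha (hbn ▸ hb)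
  refine ⟨?_, part2⟩
  by_contra h
  push_neg at h
  obtain ⟨x, y, hx, hy, hxy⟩ := Set.one_lt_encard_iff.1 (lt_trans (by decide : (1:ℕ∞) < 2) h)
  have hsub : ¬ {e : ℤ | V e = 1} ⊆ {x, y} := by
    intro hs
    have := (Set.encard_mono hs).trans_eq (Set.encard_pair hxy)
    exact absurd this (not_le.2 h)
  obtain ⟨z, hz, hz'⟩ := Set.not_subset.1 hsub
  simp only [Set.mem_insert_iff, Set.mem_singleton_iff, not_or] at hz'
  obtain ⟨hzx, hzy⟩ := hz'
  simp only [Set.mem_setOf_eq] at hx hy hz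
  -- produce a sorted triple
  obtain ⟨u, v, w, huv, hvw, hu, hv, hw⟩ :
      ∃ u v w : ℤ, u < v ∧ v < w ∧ V u = 1 ∧ V v = 1 ∧ V w = 1 := by
    rcases lt_trichotomy x y with h1 | h1 | h1
    · rcases lt_trichotomy y z with h2 | h2 | h2
      · exact ⟨x, y, z, h1, h2, hx, hy, hz⟩
      · exact absurd h2.symm hzy
      · rcases lt_trichotomy x z with h3 | h3 | h3
        · exact ⟨x, z, y, h3, h2, hx, hz, hy⟩
        · exact absurd h3.symm hzx
        · exact ⟨z, x, y, h3, h1, hz, hx, hy⟩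
    · exact absurd h1 hxy
    · rcases lt_trichotomy x z with h2 | h2 | h2
      · exact ⟨y, x, z, h1, h2, hy, hx, hz⟩
      · exact absurd h2.symm hzx
      · rcases lt_trichotomy y z with h3 | h3 | h3
        · exact ⟨y, z, x, h3, h2, hy, hz, hx⟩
        · exact absurd h3.symm hzy
        · exact ⟨z, y, x, h3, h1, hz, hy, hx⟩
  have hwu : w - u ≤ 2 := part2 u w hu hw (by omega)
  have hv1 : v = u + 1 := by omega
  have hw1 : w = u + 2 := by omega
  subst hv1
  subst hw1
  have hval := hV u
  rw [hv, hu, mul_one, mul_one] at hval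
  rw [hw] at hval
  exact jones_T_ne hval.symm
end

section
/- In ℤ[X], for a natural number a ≥ 1 define P₀(a) = X^(3a) + (−1)^a·X^(a+2) and P₁(a) = X^(3a−1) + (−1)^(a+1)·X^(a−1). Let k be a natural number, A : Fin k → ℕ with A i ≥ 1 for all i, and J : Fin k → ℕ with J i ≤ 1 for all i. Then the degree of the product ∏ i, P_{J i}(A i) satisfies degree(∏ i, P_{J i}(A i)) ≤ 3·(∑ i, A i) − (∑ i, J i) in WithBot ℕ, with equality if and only if for every i, J i = 0 implies A i ≥ 2. -/
open Polynomial in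
/-- auxiliary: monic case -/
theorem jones_block_aux (n m : ℕ) (c : ℤ) (h : m < n) :
    (X ^ n + C c * X ^ m : Polynomial ℤ).Monic ∧
    (X ^ n + C c * X ^ m : Polynomial ℤ).degree = (n : WithBot ℕ) := by
  have hd : (C c * X ^ m : Polynomial ℤ).degree < (X ^ n : Polynomial ℤ).degree := by
    refine lt_of_le_of_lt (degree_C_mul_X_pow_le m c) ?_
    rw [degree_X_pow]
    exact_mod_cast h
  constructor
  · exact monic_X_pow_add (by rwa [degree_X_pow] at hd)
  · rw [degree_add_eq_left_of_degree_lt hd, degree_X_pow]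

open Polynomial in
/-- **Lemma 4.26**. With `P₀(a) = X^{3a} + (−1)^a X^{a+2}` and
`P₁(a) = X^{3a−1} + (−1)^{a+1} X^{a−1}` in `ℤ[X]` (for `a ≥ 1`), if `A i ≥ 1` and
`J i ≤ 1` for all `i`, then `deg (∏ i, P_{J i}(A i)) ≤ 3·(∑ A i) − (∑ J i)`, with
equality if and only if `J i = 0` implies `A i ≥ 2`. -/
theorem jones_block_degree_bound (k : ℕ)
    (A : Fin k → ℕ) (hA : ∀ i, 1 ≤ A i)
    (J : Fin k → ℕ) (hJ : ∀ i, J i ≤ 1)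
    (P : ℕ → ℕ → Polynomial ℤ)
    (hP0 : ∀ a : ℕ, 1 ≤ a →
      P 0 a = X ^ (3 * a) + C ((-1 : ℤ) ^ a) * X ^ (a + 2))
    (hP1 : ∀ a : ℕ, 1 ≤ a →
      P 1 a = X ^ (3 * a - 1) + C ((-1 : ℤ) ^ (a + 1)) * X ^ (a - 1)) :
    (∏ i, P (J i) (A i)).degree ≤ ((3 * (∑ i, A i) - (∑ i, J i) : ℕ) : WithBot ℕ) ∧
    ((∏ i, P (J i) (A i)).degree = ((3 * (∑ i, A i) - (∑ i, J i) : ℕ) : WithBot ℕ) ↔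
      ∀ i, J i = 0 → 2 ≤ A i) := by
  by_cases hgood : ∀ i, J i = 0 → 2 ≤ A i
  · -- every factor is monic of degree 3*A i - J i
    have hfac : ∀ i, (P (J i) (A i)).Monic ∧
        (P (J i) (A i)).degree = ((3 * A i - J i : ℕ) : WithBot ℕ) := by
      intro i
      rcases Nat.le_one_iff_eq_zero_or_eq_one.mp (hJ i) with h0 | h1
      · have ha := hgood i h0
        rw [h0, hP0 (A i) (hA i)]
        have := jones_block_aux (3 * A i) (A i + 2) ((-1 : ℤ) ^ A i) (by omega)
        refine ⟨this.1, ?_⟩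
        rw [this.2]; norm_cast
      · have ha := hA i
        rw [h1, hP1 (A i) (hA i)]
        have := jones_block_aux (3 * A i - 1) (A i - 1) ((-1 : ℤ) ^ (A i + 1)) (by omega)
        exact ⟨this.1, this.2⟩
    have hmon : (∏ i, P (J i) (A i)).Monic :=
      monic_prod_of_monic _ _ fun i _ => (hfac i).1
    have hnd : ∀ i, (P (J i) (A i)).natDegree = 3 * A i - J i := fun i =>
      natDegree_eq_of_degree_eq_some (hfac i).2
    have hdeg : (∏ i, P (J i) (A i)).degree
        = ((∑ i, (3 * A i - J i) : ℕ) : WithBot ℕ) := by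
      rw [degree_prod]
      rw [Nat.cast_sum]
      exact Finset.sum_congr rfl fun i _ => (hfac i).2
    have hsum : (∑ i, (3 * A i - J i)) = 3 * (∑ i, A i) - (∑ i, J i) := by
      have h1 : (∑ i, (3 * A i - J i)) + (∑ i, J i) = ∑ i, 3 * A i := by
        rw [← Finset.sum_add_distrib]
        exact Finset.sum_congr rfl fun i _ => by have := hJ i; have := hA i; omega
      have h2 : (∑ i, 3 * A i) = 3 * ∑ i, A i := by rw [Finset.mul_sum]
      omega
    rw [hdeg, hsum]
    exact ⟨le_rfl, ⟨fun _ => hgood, fun _ => rfl⟩⟩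
  · -- some factor is zero
    push_neg at hgood
    obtain ⟨i₀, hJ0, hA1⟩ := hgood
    have hA1' : A i₀ = 1 := le_antisymm (by omega) (hA i₀)
    have hz : P (J i₀) (A i₀) = 0 := by
      rw [hJ0, hA1', hP0 1 le_rfl]
      norm_num
    have hprod : (∏ i, P (J i) (A i)) = 0 :=
      Finset.prod_eq_zero (Finset.mem_univ i₀) hz
    rw [hprod, degree_zero]
    refine ⟨bot_le, ?_⟩
    constructor
    · intro h; exact absurd h.symm (by exact_mod_cast WithBot.coe_ne_bot)
    · intro h; exact absurd (h i₀ hJ0) (by omega)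
end

section
/- Let V : ℤ → ℤ[T,T⁻¹] satisfy the Jones recurrence V(e+2) = (T³ − T)·V(e+1) + T⁴·V(e) for all e : ℤ, with V(0) = −T − T⁻¹ and V(1) = 1. Then for every a : ℤ, (T + T³)·V(a) = −T^(3a+2) − ε(a)·(T^a + T^(a+2) + T^(a+4)), where ε(a) = 1 if a is even and ε(a) = −1 if a is odd. -/
/-!
The characteristic polynomial of the Jones recurrence factors as
`X² − (T³ − T)X − T⁴ = (X − T³)(X + T)`, so `a ↦ T^{3a}` and `a ↦ (−T)^a = ε(a)T^a` solve it,
and so does the right-hand side, being a linear combination of them. The left-hand side solves it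
too, and a solution of a two-term recurrence over `ℤ` whose trailing coefficient `T⁴` is a unit is
determined by its values at `0` and `1`, where the two sides agree.
-/

open LaurentPolynomial

section Recurrence

variable {R : Type*} [CommRing R] {p q : R}

def SolvesRecurrence (p q : R) (f : ℤ → R) : Prop :=
  ∀ e : ℤ, f (e + 2) = p * f (e + 1) + q * f e

namespace SolvesRecurrence

theorem const_mul {f : ℤ → R} (hf : SolvesRecurrence p q f) (c : R) :
    SolvesRecurrence p q fun a => c * f a := fun e => by
  dsimp only; rw [hf e]; ring

theorem add {f g : ℤ → R} (hf : SolvesRecurrence p q f) (hg : SolvesRecurrence p q g) :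
    SolvesRecurrence p q fun a => f a + g a := fun e => by
  dsimp only; rw [hf e, hg e]; ring

theorem of_ratio {f : ℤ → R} {r : R} (hr : r ^ 2 = p * r + q) (hf : ∀ e, f (e + 1) = r * f e) :
    SolvesRecurrence p q f := fun e => by
  rw [show e + 2 = e + 1 + 1 by ring, hf, hf, ← mul_assoc, ← sq, hr]; ring

theorem ext_of_isUnit {f g : ℤ → R} (hq : IsUnit q) (hf : SolvesRecurrence p q f)
    (hg : SolvesRecurrence p q g) (h0 : f 0 = g 0) (h1 : f 1 = g 1) : f = g := by
  suffices h : ∀ n : ℤ, f n = g n ∧ f (n + 1) = g (n + 1) from funext fun n => (h n).1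
  intro n
  induction n using Int.induction_on with
  | zero => exact ⟨h0, h1⟩
  | succ n ih =>
    refine ⟨ih.2, ?_⟩
    rw [add_assoc, one_add_one_eq_two, hf, hg, ih.1, ih.2]
  | pred n ih =>
    refine ⟨hq.mul_left_cancel ?_, by rw [sub_add_cancel]; exact ih.1⟩
    have hf' := hf (-n - 1)
    have hg' := hg (-n - 1)
    rw [show -(n : ℤ) - 1 + 2 = -n + 1 by ring, sub_add_cancel] at hf' hg'
    linear_combination ih.2 - p * ih.1 - hf' + hg'

end SolvesRecurrence

end Recurrence

theorem ite_even_add_one {R : Type*} [Ring R] (a : ℤ) :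
    (if Even (a + 1) then (1 : R) else -1) = -(if Even a then 1 else -1) := by
  by_cases h : Even a <;> simp [h]

/-- **Equation (3.4)** underlying Proposition 4.1 (Jones polynomials of `(2,a)` torus
links), cleared of denominators. If `V : ℤ → ℤ[T,T⁻¹]` satisfies the Jones recurrence
with `V 0 = −T − T⁻¹` and `V 1 = 1`, then for every `a : ℤ`,
`(T + T³)·V(a) = −T^{3a+2} − ε(a)(T^a + T^{a+2} + T^{a+4})`, where `ε(a) = ±1`
according to the parity of `a`. -/
theorem jones_two_braid_closed_form (V : ℤ → LaurentPolynomial ℤ)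
    (hV : ∀ e : ℤ, V (e + 2) = (T 3 - T 1) * V (e + 1) + T 4 * V e)
    (h0 : V 0 = -T 1 - T (-1))
    (h1 : V 1 = 1) :
    ∀ a : ℤ,
      (T 1 + T 3) * V a =
        -T (3 * a + 2) -
          (if Even a then 1 else -1) * (T a + T (a + 2) + T (a + 4)) := by
  have hcube : SolvesRecurrence (T 3 - T 1) (T 4) fun a => (T (3 * a) : LaurentPolynomial ℤ) :=
    .of_ratio (r := T 3) (by simp only [sq, sub_mul, ← T_add]; norm_num)
      fun e => by rw [mul_add, mul_one, T_add, mul_comm]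
  have hsign : SolvesRecurrence (T 3 - T 1) (T 4)
      fun a => (if Even a then 1 else -1) * (T a : LaurentPolynomial ℤ) :=
    .of_ratio (r := -T 1) (by simp only [sq, neg_mul, mul_neg, sub_mul, ← T_add]; norm_num)
      fun e => by rw [ite_even_add_one, T_add]; ring
  have hrhs := (hcube.const_mul (-T 2)).add (hsign.const_mul (-(1 + T 2 + T 4)))
  have hlhs : SolvesRecurrence (T 3 - T 1) (T 4) fun a => (T 1 + T 3) * V a :=
    SolvesRecurrence.const_mul hV _
  have hsides := hlhs.ext_of_isUnit (isUnit_T 4) hrhs ?_ ?_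
  · intro a
    rw [congrFun hsides a]
    simp only [T_add]
    ring
  · simp only [h0, mul_zero, T_zero, Even.zero, if_true, mul_one]
    simp only [add_mul, mul_sub, mul_neg, ← T_add]
    norm_num [T_zero]
    ring
  · simp only [h1, mul_one, Int.not_even_one, if_false]
    simp only [neg_mul, one_mul, add_mul, mul_neg, neg_neg, ← T_add]
    norm_num
end

section
/- Let V : ℤ → ℤ[T,T⁻¹] satisfy the Jones recurrence V(e+2) = (T³ − T)·V(e+1) + T⁴·V(e) for all e : ℤ, with V(0) = −T − T⁻¹ and V(1) = 1. Then V(−1) = 1; for every integer a ≥ 2, V(a) = (−1)^(a+1)·T^(a−1) + ∑_{k=0}^{a−2} (−1)^(k+1)·T^(3a−1−2k); and for every integer a ≤ −2, V(a) = (−1)^(a+1)·T^(a+1) + ∑_{k=0}^{−a−2} (−1)^(k+1)·T^(3a+1+2k), where (−1)^m for an integer m means 1 if m is even and −1 if m is odd. -/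
open LaurentPolynomial Finset

noncomputable def Sp (m : ℕ) (e : ℤ) : LaurentPolynomial ℤ :=
  ∑ k ∈ range m, (-1:LaurentPolynomial ℤ)^(k+1) * T (e - 2*(k:ℤ))

lemma Sp_succ (m : ℕ) (e : ℤ) :
    Sp (m+1) e = Sp m e + (-1)^(m+1) * T (e - 2*(m:ℤ)) := sum_range_succ _ _

lemma T_mul_Sp (c e : ℤ) (m : ℕ) : T c * Sp m e = Sp m (e + c) := by
  simp only [Sp, mul_sum]
  refine sum_congr rfl fun k _ => ?_
  rw [mul_left_comm, ← T_add, show c + (e - 2*(k:ℤ)) = e + c - 2*k by ring]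

noncomputable def Sn (m : ℕ) (e : ℤ) : LaurentPolynomial ℤ :=
  ∑ k ∈ range m, (-1:LaurentPolynomial ℤ)^(k+1) * T (e + 2*(k:ℤ))

lemma Sn_succ (m : ℕ) (e : ℤ) :
    Sn (m+1) e = Sn m e + (-1)^(m+1) * T (e + 2*(m:ℤ)) := sum_range_succ _ _

lemma T_mul_Sn (c e : ℤ) (m : ℕ) : T c * Sn m e = Sn m (e + c) := by
  simp only [Sn, mul_sum]
  refine sum_congr rfl fun k _ => ?_
  rw [mul_left_comm, ← T_add, show c + (e + 2*(k:ℤ)) = e + c + 2*k by ring]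

noncomputable def Fp (a : ℤ) : LaurentPolynomial ℤ :=
  (if Even (a + 1) then 1 else -1) * T (a - 1) + Sp (a.toNat - 1) (3*a - 1)

noncomputable def Fn (a : ℤ) : LaurentPolynomial ℤ :=
  (if Even (a + 1) then 1 else -1) * T (a + 1) + Sn ((-a).toNat - 1) (3*a + 1)

lemma sign_shift (a : ℤ) :
    (if Even (a+1) then (1:LaurentPolynomial ℤ) else -1)
      = -(if Even a then (1:LaurentPolynomial ℤ) else -1) := by
  by_cases h : Even a
  · simp [h, Int.even_add_one, not_not]
  · simp [h, Int.even_add_one]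

lemma Fp_key (n : ℕ) :
    Fp ((n:ℤ)+3) = (T 3 - T 1) * Fp ((n:ℤ)+2) + T 4 * Fp ((n:ℤ)+1) := by
  unfold Fp
  rw [show (((n:ℤ)+3).toNat - 1) = n + 2 by omega,
      show (((n:ℤ)+2).toNat - 1) = n + 1 by omega,
      show (((n:ℤ)+1).toNat - 1) = n by omega,
      show (3*((n:ℤ)+3) - 1) = 3*n+8 by ring,
      show (3*((n:ℤ)+2) - 1) = 3*n+5 by ring,
      show (3*((n:ℤ)+1) - 1) = 3*n+2 by ring,
      show ((n:ℤ)+3+1) = (n+3)+1 by ring, show ((n:ℤ)+2+1) = (n+2)+1 by ring,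
      show ((n:ℤ)+3-1) = n+2 by ring, show ((n:ℤ)+2-1) = n+1 by ring,
      show ((n:ℤ)+1+1) = n+2 by ring, show ((n:ℤ)+1-1) = (n:ℤ) by ring,
      sign_shift ((n:ℤ)+3), sign_shift ((n:ℤ)+2),
      show ((n:ℤ)+3) = (n+2)+1 by ring, sign_shift ((n:ℤ)+2)]
  set E : LaurentPolynomial ℤ := if Even ((n:ℤ)+2) then 1 else -1 with hE
  have m1 : T 3 * Sp n (3*(n:ℤ)+5) = Sp n (3*(n:ℤ)+8) := by
    rw [T_mul_Sp, show (3*(n:ℤ)+5+3 : ℤ) = 3*n+8 by ring]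
  have m2 : T 1 * Sp n (3*(n:ℤ)+5) = Sp n (3*(n:ℤ)+6) := by
    rw [T_mul_Sp, show (3*(n:ℤ)+5+1 : ℤ) = 3*n+6 by ring]
  have m3 : T 4 * Sp n (3*(n:ℤ)+2) = Sp n (3*(n:ℤ)+6) := by
    rw [T_mul_Sp, show (3*(n:ℤ)+2+4 : ℤ) = 3*n+6 by ring]
  have t1 : (T 3 * T ((n:ℤ)+1) : LaurentPolynomial ℤ) = T ((n:ℤ)+4) := by rw [← T_add, show (3+((n:ℤ)+1):ℤ) = n+4 by ring]
  have t2 : (T 1 * T ((n:ℤ)+1) : LaurentPolynomial ℤ) = T ((n:ℤ)+2) := by rw [← T_add, show (1+((n:ℤ)+1):ℤ) = n+2 by ring]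
  have t3 : (T 4 * T ((n:ℤ)) : LaurentPolynomial ℤ) = T ((n:ℤ)+4) := by rw [← T_add, show ((4:ℤ)+(n:ℤ)) = (n:ℤ)+4 by ring]
  have t4 : (T 3 * T ((n:ℤ)+5) : LaurentPolynomial ℤ) = T ((n:ℤ)+8) := by
    rw [← T_add, show ((3:ℤ)+((n:ℤ)+5)) = (n:ℤ)+8 by ring]
  have t5 : (T 1 * T ((n:ℤ)+5) : LaurentPolynomial ℤ) = T ((n:ℤ)+6) := by
    rw [← T_add, show ((1:ℤ)+((n:ℤ)+5)) = (n:ℤ)+6 by ring]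
  have s1 : Sp (n+2) (3*(n:ℤ)+8)
      = Sp n (3*(n:ℤ)+8) + (-1)^(n+1) * T ((n:ℤ)+8)
        + (-1)^(n+2) * T ((n:ℤ)+6) := by
    rw [Sp_succ, Sp_succ]
    push_cast
    rw [show (3*(n:ℤ)+8-2*((n:ℤ)+1)) = (n:ℤ)+6 by ring,
        show (3*(n:ℤ)+8-2*(n:ℤ)) = (n:ℤ)+8 by ring]
  have s2 : Sp (n+1) (3*(n:ℤ)+5)
      = Sp n (3*(n:ℤ)+5) + (-1)^(n+1) * T ((n:ℤ)+5) := by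
    rw [Sp_succ, show (3*(n:ℤ)+5-2*(n:ℤ)) = (n:ℤ)+5 by ring]
  have p : ((-1:LaurentPolynomial ℤ))^(n+2) = -(-1)^(n+1) := by
    rw [pow_succ]; ring
  rw [s1, s2]
  linear_combination -m1 + m2 - m3 + E*t1 - E*t2 - E*t3
    - (-1:LaurentPolynomial ℤ)^(n+1)*t4 + (-1:LaurentPolynomial ℤ)^(n+1)*t5
    + T ((n:ℤ)+6) * p


lemma neg_if (p : Prop) [Decidable p] :
    (if ¬ p then (1:LaurentPolynomial ℤ) else -1)
      = -(if p then (1:LaurentPolynomial ℤ) else -1) := by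
  by_cases h : p <;> simp [h]

lemma Fn_key (n : ℕ) :
    T 4 * Fn (-(n:ℤ)-3) = Fn (-(n:ℤ)-1) - (T 3 - T 1) * Fn (-(n:ℤ)-2) := by
  unfold Fn
  rw [show ((-(-(n:ℤ)-3)).toNat - 1) = n + 2 by omega,
      show ((-(-(n:ℤ)-2)).toNat - 1) = n + 1 by omega,
      show ((-(-(n:ℤ)-1)).toNat - 1) = n by omega,
      show (3*(-(n:ℤ)-3) + 1) = -3*(n:ℤ)-8 by ring,
      show (3*(-(n:ℤ)-2) + 1) = -3*(n:ℤ)-5 by ring,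
      show (3*(-(n:ℤ)-1) + 1) = -3*(n:ℤ)-2 by ring]
  have hiff1 : Even (-(n:ℤ)-3+1) ↔ Even (n:ℤ) := by simp only [Int.even_iff]; omega
  have hiff2 : Even (-(n:ℤ)-2+1) ↔ ¬ Even (n:ℤ) := by simp only [Int.even_iff]; omega
  have hiff3 : Even (-(n:ℤ)-1+1) ↔ Even (n:ℤ) := by simp only [Int.even_iff]; omega
  rw [if_congr hiff1 rfl rfl, if_congr hiff2 rfl rfl, if_congr hiff3 rfl rfl, neg_if]
  rw [show (-(n:ℤ)-3+1) = -(n:ℤ)-2 by ring, show (-(n:ℤ)-2+1) = -(n:ℤ)-1 by ring,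
      show (-(n:ℤ)-1+1) = -(n:ℤ) by ring]
  set E : LaurentPolynomial ℤ := if Even ((n:ℤ)) then 1 else -1 with hE
  have s1 : Sn (n+2) (-3*(n:ℤ)-8)
      = Sn n (-3*(n:ℤ)-8) + (-1)^(n+1) * T (-(n:ℤ)-8)
        + (-1)^(n+2) * T (-(n:ℤ)-6) := by
    rw [Sn_succ, Sn_succ]
    push_cast
    rw [show (-3*(n:ℤ)-8+2*((n:ℤ)+1)) = -(n:ℤ)-6 by ring,
        show (-3*(n:ℤ)-8+2*(n:ℤ)) = -(n:ℤ)-8 by ring]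
  have s2 : Sn (n+1) (-3*(n:ℤ)-5)
      = Sn n (-3*(n:ℤ)-5) + (-1)^(n+1) * T (-(n:ℤ)-5) := by
    rw [Sn_succ, show (-3*(n:ℤ)-5+2*(n:ℤ)) = -(n:ℤ)-5 by ring]
  have m1 : T 4 * Sn n (-3*(n:ℤ)-8) = Sn n (-3*(n:ℤ)-4) := by
    rw [T_mul_Sn, show (-3*(n:ℤ)-8+4 : ℤ) = -3*(n:ℤ)-4 by ring]
  have m2 : T 3 * Sn n (-3*(n:ℤ)-5) = Sn n (-3*(n:ℤ)-2) := by
    rw [T_mul_Sn, show (-3*(n:ℤ)-5+3 : ℤ) = -3*(n:ℤ)-2 by ring]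
  have m3 : T 1 * Sn n (-3*(n:ℤ)-5) = Sn n (-3*(n:ℤ)-4) := by
    rw [T_mul_Sn, show (-3*(n:ℤ)-5+1 : ℤ) = -3*(n:ℤ)-4 by ring]
  have t1 : (T 4 * T (-(n:ℤ)-2) : LaurentPolynomial ℤ) = T (2-(n:ℤ)) := by
    rw [← T_add, show ((4:ℤ)+(-(n:ℤ)-2)) = 2-(n:ℤ) by ring]
  have t2 : (T 4 * T (-(n:ℤ)-8) : LaurentPolynomial ℤ) = T (-(n:ℤ)-4) := by
    rw [← T_add, show ((4:ℤ)+(-(n:ℤ)-8)) = -(n:ℤ)-4 by ring]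
  have t3 : (T 4 * T (-(n:ℤ)-6) : LaurentPolynomial ℤ) = T (-(n:ℤ)-2) := by
    rw [← T_add, show ((4:ℤ)+(-(n:ℤ)-6)) = -(n:ℤ)-2 by ring]
  have t4 : (T 3 * T (-(n:ℤ)-1) : LaurentPolynomial ℤ) = T (2-(n:ℤ)) := by
    rw [← T_add, show ((3:ℤ)+(-(n:ℤ)-1)) = 2-(n:ℤ) by ring]
  have t5 : (T 1 * T (-(n:ℤ)-1) : LaurentPolynomial ℤ) = T (-(n:ℤ)) := by
    rw [← T_add, show ((1:ℤ)+(-(n:ℤ)-1)) = -(n:ℤ) by ring]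
  have t6 : (T 3 * T (-(n:ℤ)-5) : LaurentPolynomial ℤ) = T (-(n:ℤ)-2) := by
    rw [← T_add, show ((3:ℤ)+(-(n:ℤ)-5)) = -(n:ℤ)-2 by ring]
  have t7 : (T 1 * T (-(n:ℤ)-5) : LaurentPolynomial ℤ) = T (-(n:ℤ)-4) := by
    rw [← T_add, show ((1:ℤ)+(-(n:ℤ)-5)) = -(n:ℤ)-4 by ring]
  have p : ((-1:LaurentPolynomial ℤ))^(n+2) = -(-1)^(n+1) := by
    rw [pow_succ]; ring
  rw [s1, s2]
  linear_combination E*t1 + m1 + (-1:LaurentPolynomial ℤ)^(n+1)*t2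
    + (-1:LaurentPolynomial ℤ)^(n+2)*t3 - E*t4 + E*t5 + m2 - m3
    + (-1:LaurentPolynomial ℤ)^(n+1)*t6 - (-1:LaurentPolynomial ℤ)^(n+1)*t7
    + T (-(n:ℤ)-2) * p



open LaurentPolynomial in
/-- **Proposition 4.1** (Jones polynomials of the `(2,a)` torus links). If
`V : ℤ → ℤ[T,T⁻¹]` satisfies the Jones recurrence with `V 0 = −T − T⁻¹` and
`V 1 = 1`, then `V (−1) = 1`; for `a ≥ 2`,
`V a = (−1)^{a+1} T^{a−1} + ∑_{k=0}^{a−2} (−1)^{k+1} T^{3a−1−2k}`; and for `a ≤ −2`,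
`V a = (−1)^{a+1} T^{a+1} + ∑_{k=0}^{−a−2} (−1)^{k+1} T^{3a+1+2k}`. -/
theorem jones_two_braid_explicit (V : ℤ → LaurentPolynomial ℤ)
    (hV : ∀ e : ℤ, V (e + 2) = (T 3 - T 1) * V (e + 1) + T 4 * V e)
    (h0 : V 0 = -T 1 - T (-1))
    (h1 : V 1 = 1) :
    V (-1) = 1 ∧
    (∀ a : ℤ, 2 ≤ a →
      V a = (if Even (a + 1) then 1 else -1) * T (a - 1) +
        ∑ k ∈ Finset.range (a.toNat - 1),
          (-1 : LaurentPolynomial ℤ) ^ (k + 1) * T (3 * a - 1 - 2 * (k : ℤ))) ∧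
    (∀ a : ℤ, a ≤ -2 →
      V a = (if Even (a + 1) then 1 else -1) * T (a + 1) +
        ∑ k ∈ Finset.range ((-a).toNat - 1),
          (-1 : LaurentPolynomial ℤ) ^ (k + 1) * T (3 * a + 1 + 2 * (k : ℤ))) := by
  have hT4 : IsUnit (T 4 : LaurentPolynomial ℤ) := isUnit_T 4
  have a1 : (T 3 : LaurentPolynomial ℤ) * T 1 = T 4 := by rw [← T_add]; norm_num
  have a2 : (T 3 : LaurentPolynomial ℤ) * T (-1) = T 2 := by rw [← T_add]; norm_num
  have a3 : (T 1 : LaurentPolynomial ℤ) * T 1 = T 2 := by rw [← T_add]; norm_num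
  have a4 : (T 1 : LaurentPolynomial ℤ) * T (-1) = 1 := by
    rw [← T_add]; norm_num [T_zero]
  have key0 : (T 3 - T 1 : LaurentPolynomial ℤ) * (-T 1 - T (-1)) = 1 - T 4 := by
    linear_combination -a1 - a2 + a3 + a4
  have hVm1 : V (-1) = 1 := by
    have h := hV (-1)
    norm_num at h
    rw [h1, h0] at h
    apply hT4.mul_left_cancel
    rw [mul_one]
    linear_combination -h - key0
  have pos : ∀ n : ℕ, V ((n:ℤ)+1) = Fp ((n:ℤ)+1) ∧ V ((n:ℤ)+2) = Fp ((n:ℤ)+2) := by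
    intro n
    induction n with
    | zero =>
      constructor
      · norm_num [Fp, Sp, h1, T_zero]
      · have h := hV 0
        norm_num at h
        rw [h0, h1] at h
        have b1 : (T 4 : LaurentPolynomial ℤ) * T 1 = T 5 := by rw [← T_add]; norm_num
        have b2 : (T 4 : LaurentPolynomial ℤ) * T (-1) = T 3 := by rw [← T_add]; norm_num
        have hFp2 : Fp (2:ℤ) = -T 1 - T 5 := by
          rw [Fp, show ((2:ℤ).toNat - 1) = 1 from rfl, show (3*(2:ℤ)-1) = 5 by norm_num,
              show ((2:ℤ)-1) = 1 by norm_num, Sp, sum_range_one]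
          norm_num [show ¬ Even (3:ℤ) by decide]
          ring
        norm_num
        rw [h, hFp2]
        linear_combination -b1 - b2
    | succ n ih =>
      have e1 : ((n+1:ℕ):ℤ) = (n:ℤ)+1 := by push_cast; ring
      rw [e1]
      constructor
      · rw [show (n:ℤ)+1+1 = (n:ℤ)+2 by ring]; exact ih.2
      · have h := hV ((n:ℤ)+1)
        rw [show (n:ℤ)+1+2 = (n:ℤ)+3 by ring]
        rw [show (n:ℤ)+1+2 = (n:ℤ)+3 by ring, show (n:ℤ)+1+1 = (n:ℤ)+2 by ring] at h
        rw [ih.1, ih.2] at h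
        rw [h, Fp_key n]
  have neg : ∀ n : ℕ, V (-(n:ℤ)-1) = Fn (-(n:ℤ)-1) ∧ V (-(n:ℤ)-2) = Fn (-(n:ℤ)-2) := by
    intro n
    induction n with
    | zero =>
      constructor
      · norm_num [Fn, Sn, hVm1, T_zero]
      · have h := hV (-2)
        norm_num at h
        rw [hVm1] at h
        norm_num [h0] at h
        have b1 : (T 4 : LaurentPolynomial ℤ) * T (-1) = T 3 := by rw [← T_add]; norm_num
        have b2 : (T 4 : LaurentPolynomial ℤ) * T (-5) = T (-1) := by rw [← T_add]; norm_num
        have hFn2 : Fn (-2:ℤ) = -T (-1) - T (-5) := by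
          rw [Fn, show ((-(-2:ℤ)).toNat - 1) = 1 from rfl, show (3*(-2:ℤ)+1) = -5 by norm_num,
              show ((-2:ℤ)+1) = -1 by norm_num, Sn, sum_range_one]
          norm_num [show ¬ Even (-1:ℤ) by decide]
          ring
        rw [show -((0:ℕ):ℤ)-2 = -2 by norm_num]
        apply hT4.mul_left_cancel
        rw [hFn2]
        linear_combination -h + b1 + b2
    | succ n ih =>
      have e1 : ((n+1:ℕ):ℤ) = (n:ℤ)+1 := by push_cast; ring
      rw [e1]
      constructor
      · rw [show -((n:ℤ)+1)-1 = -(n:ℤ)-2 by ring]; exact ih.2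
      · rw [show -((n:ℤ)+1)-2 = -(n:ℤ)-3 by ring]
        have h := hV (-(n:ℤ)-3)
        rw [show -(n:ℤ)-3+2 = -(n:ℤ)-1 by ring, show -(n:ℤ)-3+1 = -(n:ℤ)-2 by ring] at h
        rw [ih.1, ih.2] at h
        apply hT4.mul_left_cancel
        rw [Fn_key n]
        linear_combination -h
  refine ⟨hVm1, ?_, ?_⟩
  · intro a ha
    obtain ⟨n, rfl⟩ : ∃ n : ℕ, a = (n:ℤ)+1 := ⟨(a-1).toNat, by omega⟩
    exact (pos n).1
  · intro a ha
    obtain ⟨n, rfl⟩ : ∃ n : ℕ, a = -(n:ℤ)-2 := ⟨(-a-2).toNat, by omega⟩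
    exact (neg n).2
end
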